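/- arXiv:2412.07699 — 6 statements merged into one kernel-verified Lean document; each statement's English description precedes it below -/
import Mathlib

section
/- Let G, A, B be small profinite groups. If G × A is topologically isomorphic to G × B, then A is topologically isomorphic to B. -/
/-- Two topological groups are topologically isomorphic: there is a group isomorphism
which is a homeomorphism. -/
def IsTopIso (G H : Type*) [Group G] [TopologicalSpace G] [Group H]
    [TopologicalSpace H] : Prop :=
  ∃ e : G ≃* H, Continuous e ∧ Continuous e.symm

/-- A topological group is *small* if for every `n : ℕ` it has only finitely many
open normal subgroups of index `n`. -/
def SmallGroup (G : Type*) [Group G] [TopologicalSpace G] : Prop :=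
  ∀ n : ℕ, {H : Subgroup G | H.Normal ∧ IsOpen (H : Set G) ∧ H.index = n}.Finite

/-- A topological group is *indecomposable* if whenever it is topologically isomorphic
to a direct product `A × B` of profinite groups, `A` or `B` is trivial. -/
def Indecomposable (G : Type*) [Group G] [TopologicalSpace G] : Prop :=
  ∀ (A B : Type) [Group A] [TopologicalSpace A] [IsTopologicalGroup A] [CompactSpace A]
    [T2Space A] [TotallyDisconnectedSpace A]
    [Group B] [TopologicalSpace B] [IsTopologicalGroup B] [CompactSpace B]
    [T2Space B] [TotallyDisconnectedSpace B],
    IsTopIso G (A × B) → (∀ a : A, a = 1) ∨ (∀ b : B, b = 1)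

/-- A bundled profinite group: a compact, Hausdorff, totally disconnected topological group. -/
structure ProfiniteGroup where
  carrier : Type
  [group : Group carrier]
  [topology : TopologicalSpace carrier]
  [topGroup : IsTopologicalGroup carrier]
  [compact : CompactSpace carrier]
  [t2 : T2Space carrier]
  [td : TotallyDisconnectedSpace carrier]

attribute [instance] ProfiniteGroup.group ProfiniteGroup.topology ProfiniteGroup.topGroup
  ProfiniteGroup.compact ProfiniteGroup.t2 ProfiniteGroup.td

/-!
Let `K_n X` (`lowIndexCore n X`) be the intersection of the open normal subgroups of `X` of index
at most `n`. For a small group it is open, so `X ⧸ K_n X` is finite; moreover `K_n` commutes with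
products and is preserved by topological isomorphisms. Hence `(G ⧸ K_n G) × (A ⧸ K_n A)` and
`(G ⧸ K_n G) × (B ⧸ K_n B)` are isomorphic, and Lovász's cancellation for finite groups (via
counting homomorphisms from every finite group) gives `A ⧸ K_n A ≃* B ⧸ K_n B`. An isomorphism at
level `m` descends to every level `n ≤ m`, so by König's lemma these can be chosen compatibly, and
since the `K_n` form a basis of neighbourhoods of `1` in a profinite group, a compatible family
assembles to a topological isomorphism `A ≃ B`.
-/

open Function Topology

universe u

section FiniteCancellation

instance instFiniteMonoidHom {C A : Type*} [Group C] [Group A] [Finite C] [Finite A] :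
    Finite (C →* A) :=
  Finite.of_injective _ DFunLike.coe_injective

def monoidHomProdEquiv (C M N : Type*) [Group C] [Group M] [Group N] :
    (C →* M × N) ≃ (C →* M) × (C →* N) where
  toFun f := ((MonoidHom.fst M N).comp f, (MonoidHom.snd M N).comp f)
  invFun p := p.1.prod p.2
  left_inv _ := rfl
  right_inv _ := rfl

noncomputable def kerEqEquivInjective {C : Type*} [Group C] (N : Subgroup C) [N.Normal]
    (A : Type*) [Group A] :
    {f : C →* A // f.ker = N} ≃ {g : C ⧸ N →* A // Injective g} where
  toFun f := ⟨QuotientGroup.lift N f f.2.ge, (QuotientGroup.injective_lift_iff _ _ _).2 f.2.symm⟩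
  invFun g := ⟨g.1.comp (QuotientGroup.mk' N), by
    rw [← MonoidHom.comap_ker, (MonoidHom.ker_eq_bot_iff _).2 g.2, MonoidHom.comap_bot,
      QuotientGroup.ker_mk']⟩
  left_inv _ := rfl
  right_inv _ := by ext; rfl

def notInjectiveEquivSigmaKer {C : Type*} [Group C] (A : Type*) [Group A] :
    {f : C →* A // ¬Injective f} ≃
      Σ N : {N : Subgroup C // N ≠ ⊥}, {f : C →* A // f.ker = N.1} where
  toFun f := ⟨⟨f.1.ker, mt (MonoidHom.ker_eq_bot_iff _).1 f.2⟩, ⟨f.1, rfl⟩⟩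
  invFun S := ⟨S.2.1, fun hinj => S.1.2 (S.2.2 ▸ (MonoidHom.ker_eq_bot_iff _).2 hinj)⟩
  left_inv _ := rfl
  right_inv := by rintro ⟨⟨N, hN⟩, ⟨f, hf⟩⟩; dsimp at hf; subst hf; rfl

lemma card_monoidHom_eq_card_injective_add (C A : Type*) [Group C] [Group A] [Finite C]
    [Finite A] : Nat.card (C →* A) =
      Nat.card {f : C →* A // Injective f} + Nat.card {f : C →* A // ¬Injective f} := by
  classical
  rw [← Nat.card_sum]
  exact Nat.card_congr (Equiv.sumCompl _).symm

variable {A B : Type u} [Group A] [Group B] [Finite A] [Finite B]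

/-- A non-injective homomorphism with kernel `N` is an injective homomorphism from the smaller group
`C ⧸ N`, so by induction on `|C|` the counts of non-injective, hence of injective, homomorphisms
agree. -/
lemma card_injective_eq_of_card_monoidHom_eq
    (h : ∀ (C : Type u) [Group C] [Finite C], Nat.card (C →* A) = Nat.card (C →* B))
    (C : Type u) [Group C] [Finite C] :
    Nat.card {f : C →* A // Injective f} = Nat.card {f : C →* B // Injective f} := by
  induction hC : Nat.card C using Nat.strong_induction_on generalizing C with
  | _ n ih =>
  have hfiber (N : {N : Subgroup C // N ≠ ⊥}) :
      Nat.card {f : C →* A // f.ker = N.1} = Nat.card {f : C →* B // f.ker = N.1} := by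
    by_cases hN : N.1.Normal
    · rw [Nat.card_congr (kerEqEquivInjective N.1 A), Nat.card_congr (kerEqEquivInjective N.1 B)]
      refine ih _ ?_ (C ⧸ N.1) rfl
      rw [← hC, ← Subgroup.card_mul_index N.1, Subgroup.index_eq_card]
      exact lt_mul_left Nat.card_pos ((Subgroup.one_lt_card_iff_ne_bot _).2 N.2)
    · have (M : Type u) [Group M] : IsEmpty {f : C →* M // f.ker = N.1} :=
        ⟨fun f => hN (f.2 ▸ f.1.normal_ker)⟩
      simp only [Nat.card_of_isEmpty]
  have hnotInj : Nat.card {f : C →* A // ¬Injective f} = Nat.card {f : C →* B // ¬Injective f} := by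
    rw [Nat.card_congr (notInjectiveEquivSigmaKer A), Nat.card_congr (notInjectiveEquivSigmaKer B)]
    exact Nat.card_congr (Equiv.sigmaCongrRight fun N => (Finite.card_eq.1 (hfiber N)).some)
  have := h C
  rw [card_monoidHom_eq_card_injective_add, card_monoidHom_eq_card_injective_add] at this
  omega

lemma nonempty_mulEquiv_of_card_monoidHom_eq
    (h : ∀ (C : Type u) [Group C] [Finite C], Nat.card (C →* A) = Nat.card (C →* B)) :
    Nonempty (A ≃* B) := by
  have hinj {M N : Type u} [Group M] [Group N] [Finite M] [Finite N]
      (hMN : ∀ (C : Type u) [Group C] [Finite C], Nat.card (C →* M) = Nat.card (C →* N)) :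
      ∃ f : M →* N, Injective f := by
    have hcard := card_injective_eq_of_card_monoidHom_eq hMN M
    have : Nonempty {f : M →* M // Injective f} := ⟨⟨MonoidHom.id M, injective_id⟩⟩
    obtain ⟨f, hf⟩ := (Nat.card_pos_iff.1 (hcard ▸ Nat.card_pos)).1.some
    exact ⟨f, hf⟩
  obtain ⟨f, hf⟩ := hinj h
  obtain ⟨g, hg⟩ := hinj fun C _ _ => (h C).symm
  have hcard : Nat.card A = Nat.card B :=
    le_antisymm (Nat.card_le_card_of_injective f hf) (Nat.card_le_card_of_injective g hg)
  exact ⟨MulEquiv.ofBijective f ((Nat.bijective_iff_injective_and_card f).2 ⟨hf, hcard⟩)⟩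

lemma nonempty_mulEquiv_of_prod_mulEquiv_prod {G : Type u} [Group G] [Finite G]
    (e : G × A ≃* G × B) : Nonempty (A ≃* B) := by
  refine nonempty_mulEquiv_of_card_monoidHom_eq fun C _ _ => ?_
  have hprod := Nat.card_congr (e.monoidHomCongrRightEquiv (M := C))
  rw [Nat.card_congr (monoidHomProdEquiv C G A), Nat.card_congr (monoidHomProdEquiv C G B),
    Nat.card_prod, Nat.card_prod] at hprod
  exact Nat.eq_of_mul_eq_mul_left Nat.card_pos hprod

end FiniteCancellation

def lowIndexOpenNormal (n : ℕ) (G : Type*) [Group G] [TopologicalSpace G] : Set (Subgroup G) :=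
  {H | H.Normal ∧ IsOpen (H : Set G) ∧ H.index ≤ n ∧ H.index ≠ 0}

def lowIndexCore (n : ℕ) (G : Type*) [Group G] [TopologicalSpace G] : Subgroup G :=
  sInf (lowIndexOpenNormal n G)

section LowIndexCore

variable {G X Y : Type*} [Group G] [TopologicalSpace G] [Group X] [TopologicalSpace X]
  [Group Y] [TopologicalSpace Y]

instance lowIndexCore.normal (n : ℕ) : (lowIndexCore n G).Normal :=
  ⟨fun x hx g => Subgroup.mem_sInf.2 fun H hH => hH.1.conj_mem x (Subgroup.mem_sInf.1 hx H hH) g⟩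

lemma lowIndexCore_le {n : ℕ} {H : Subgroup G} (hH : H ∈ lowIndexOpenNormal n G) :
    lowIndexCore n G ≤ H :=
  sInf_le hH

lemma lowIndexCore_antitone : Antitone fun n => lowIndexCore n G :=
  fun _ _ hnm => sInf_le_sInf fun _ hH => ⟨hH.1, hH.2.1, hH.2.2.1.trans hnm, hH.2.2.2⟩

lemma lowIndexOpenNormal_finite (hG : SmallGroup G) (n : ℕ) :
    (lowIndexOpenNormal n G).Finite := by
  refine ((Finset.range (n + 1)).finite_toSet.biUnion fun m _ => hG m).subset fun H hH => ?_
  exact Set.mem_biUnion (Finset.mem_range.2 (Nat.lt_succ_of_le hH.2.2.1)) ⟨hH.1, hH.2.1, rfl⟩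

lemma isOpen_lowIndexCore (hG : SmallGroup G) (n : ℕ) : IsOpen (lowIndexCore n G : Set G) := by
  rw [lowIndexCore, Subgroup.coe_sInf]
  exact (lowIndexOpenNormal_finite hG n).isOpen_biInter fun H hH => hH.2.1

lemma isClosed_lowIndexCore [IsTopologicalGroup G] (n : ℕ) :
    IsClosed (lowIndexCore n G : Set G) := by
  rw [lowIndexCore, Subgroup.coe_sInf]
  exact isClosed_biInter fun H hH => H.isClosed_of_isOpen hH.2.1

lemma comap_mem_lowIndexOpenNormal {φ : X →* Y} (hφ : Continuous φ) {n : ℕ} {H : Subgroup Y}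
    (hH : H ∈ lowIndexOpenNormal n Y) : H.comap φ ∈ lowIndexOpenNormal n X := by
  obtain ⟨hnormal, hopen, hle, hne⟩ := hH
  have hdvd : (H.comap φ).index ∣ H.index := by
    rw [Subgroup.index_comap]
    exact H.relIndex_dvd_index_of_normal _
  exact ⟨hnormal.comap φ, hopen.preimage hφ,
    (Nat.le_of_dvd (Nat.pos_of_ne_zero hne) hdvd).trans hle,
    fun h0 => hne (Nat.eq_zero_of_zero_dvd (h0 ▸ hdvd))⟩

lemma lowIndexCore_le_comap {φ : X →* Y} (hφ : Continuous φ) (n : ℕ) :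
    lowIndexCore n X ≤ (lowIndexCore n Y).comap φ :=
  fun _ hx => Subgroup.mem_sInf.2 fun _ hH =>
    lowIndexCore_le (comap_mem_lowIndexOpenNormal hφ hH) hx

lemma map_lowIndexCore_of_continuous {e : X ≃* Y} (he : Continuous e) (he' : Continuous e.symm)
    (n : ℕ) : (lowIndexCore n X).map (e : X →* Y) = lowIndexCore n Y := by
  refine le_antisymm (Subgroup.map_le_iff_le_comap.2 (lowIndexCore_le_comap he n)) ?_
  rw [Subgroup.map_equiv_eq_comap_symm]
  exact lowIndexCore_le_comap he' n

lemma lowIndexCore_prod (n : ℕ) :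
    lowIndexCore n (X × Y) = (lowIndexCore n X).prod (lowIndexCore n Y) := by
  refine le_antisymm (fun p hp =>
    ⟨lowIndexCore_le_comap (φ := MonoidHom.fst X Y) continuous_fst n hp,
      lowIndexCore_le_comap (φ := MonoidHom.snd X Y) continuous_snd n hp⟩) ?_
  rintro ⟨x, y⟩ ⟨hx, hy⟩
  rw [← mul_one x, ← one_mul y, ← Prod.mk_mul_mk]
  exact mul_mem
    (lowIndexCore_le_comap (φ := MonoidHom.inl X Y) (continuous_id.prodMk continuous_const) n hx)
    (lowIndexCore_le_comap (φ := MonoidHom.inr X Y) (continuous_const.prodMk continuous_id) n hy)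

def lowIndexQuotientMap (X : Type*) [Group X] [TopologicalSpace X] {n m : ℕ} (h : n ≤ m) :
    X ⧸ lowIndexCore m X →* X ⧸ lowIndexCore n X :=
  QuotientGroup.map _ _ (MonoidHom.id X) (lowIndexCore_antitone h)

@[simp]
lemma lowIndexQuotientMap_mk {n m : ℕ} (h : n ≤ m) (x : G) :
    lowIndexQuotientMap G h x = x :=
  rfl

end LowIndexCore

section Quotient

variable {X Y : Type*} [Group X] [TopologicalSpace X] [IsTopologicalGroup X]
  [Group Y] [TopologicalSpace Y] [IsTopologicalGroup Y]

lemma map_mk'_lowIndexCore {N : Subgroup X} [N.Normal] (hN : IsOpen (N : Set X)) {n : ℕ}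
    (hle : N ≤ lowIndexCore n X) :
    (lowIndexCore n X).map (QuotientGroup.mk' N) = lowIndexCore n (X ⧸ N) := by
  refine le_antisymm (Subgroup.map_le_iff_le_comap.2
    (lowIndexCore_le_comap QuotientGroup.continuous_mk n)) fun y hy => ?_
  have := QuotientGroup.discreteTopology hN
  obtain ⟨x, rfl⟩ := QuotientGroup.mk'_surjective N y
  refine ⟨x, Subgroup.mem_sInf.2 fun H hH => ?_, rfl⟩
  have hker : (QuotientGroup.mk' N).ker ≤ H := by
    rw [QuotientGroup.ker_mk']
    exact hle.trans (lowIndexCore_le hH)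
  have hidx := H.index_map_eq (QuotientGroup.mk'_surjective N) hker
  have hmap : H.map (QuotientGroup.mk' N) ∈ lowIndexOpenNormal n (X ⧸ N) :=
    ⟨hH.1.map _ (QuotientGroup.mk'_surjective N), isOpen_discrete _, hidx ▸ hH.2.2.1,
      hidx ▸ hH.2.2.2⟩
  rw [← Subgroup.comap_map_eq_self hker]
  exact lowIndexCore_le hmap hy

lemma map_map_mk'_lowIndexCore (hX : SmallGroup X) (hY : SmallGroup Y) {n m : ℕ} (h : n ≤ m)
    (f : X ⧸ lowIndexCore m X ≃* Y ⧸ lowIndexCore m Y) :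
    ((lowIndexCore n X).map (QuotientGroup.mk' _)).map
        (f : X ⧸ lowIndexCore m X →* Y ⧸ lowIndexCore m Y) =
      (lowIndexCore n Y).map (QuotientGroup.mk' _) := by
  have := QuotientGroup.discreteTopology (isOpen_lowIndexCore hX m)
  have := QuotientGroup.discreteTopology (isOpen_lowIndexCore hY m)
  rw [map_mk'_lowIndexCore (isOpen_lowIndexCore hX m) (lowIndexCore_antitone h),
    map_mk'_lowIndexCore (isOpen_lowIndexCore hY m) (lowIndexCore_antitone h)]
  exact map_lowIndexCore_of_continuous continuous_of_discreteTopology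
    continuous_of_discreteTopology n

/-- This descends because the image of `lowIndexCore n X` in the discrete group
`X ⧸ lowIndexCore m X` is `lowIndexCore n` of that group, which any isomorphism preserves. -/
noncomputable def lowIndexDescend (hX : SmallGroup X) (hY : SmallGroup Y) {n m : ℕ} (h : n ≤ m)
    (f : X ⧸ lowIndexCore m X ≃* Y ⧸ lowIndexCore m Y) :
    X ⧸ lowIndexCore n X ≃* Y ⧸ lowIndexCore n Y :=
  (QuotientGroup.quotientQuotientEquivQuotient _ _ (lowIndexCore_antitone h)).symm.trans <|
    (QuotientGroup.congr _ _ f (map_map_mk'_lowIndexCore hX hY h f)).trans <|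
      QuotientGroup.quotientQuotientEquivQuotient _ _ (lowIndexCore_antitone h)

@[simp]
lemma lowIndexDescend_mk (hX : SmallGroup X) (hY : SmallGroup Y) {n m : ℕ} (h : n ≤ m)
    (f : X ⧸ lowIndexCore m X ≃* Y ⧸ lowIndexCore m Y) (x : X) :
    lowIndexDescend hX hY h f x = lowIndexQuotientMap Y h (f x) := by
  obtain ⟨y, hy⟩ := QuotientGroup.mk_surjective (f x)
  change QuotientGroup.quotientQuotientEquivQuotient (lowIndexCore m Y) (lowIndexCore n Y)
    (lowIndexCore_antitone h) (QuotientGroup.mk (f x)) = _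
  rw [← hy]
  rfl

lemma lowIndexDescend_refl (hX : SmallGroup X) (hY : SmallGroup Y) {n : ℕ}
    (f : X ⧸ lowIndexCore n X ≃* Y ⧸ lowIndexCore n Y) : lowIndexDescend hX hY le_rfl f = f := by
  refine MulEquiv.ext fun x => QuotientGroup.induction_on x fun x => ?_
  obtain ⟨y, hy⟩ := QuotientGroup.mk_surjective (f x)
  rw [lowIndexDescend_mk, ← hy, lowIndexQuotientMap_mk]

lemma lowIndexDescend_trans (hX : SmallGroup X) (hY : SmallGroup Y) {n m k : ℕ} (hnm : n ≤ m)
    (hmk : m ≤ k) (f : X ⧸ lowIndexCore k X ≃* Y ⧸ lowIndexCore k Y) :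
    lowIndexDescend hX hY hnm (lowIndexDescend hX hY hmk f) =
      lowIndexDescend hX hY (hnm.trans hmk) f := by
  refine MulEquiv.ext fun x => QuotientGroup.induction_on x fun x => ?_
  obtain ⟨y, hy⟩ := QuotientGroup.mk_surjective (f x)
  simp only [lowIndexDescend_mk, ← hy, lowIndexQuotientMap_mk]

open CategoryTheory Opposite in
lemma exists_compatible_lowIndexQuotient_mulEquiv [CompactSpace X] [CompactSpace Y]
    (hX : SmallGroup X) (hY : SmallGroup Y)
    (hne : ∀ n, Nonempty (X ⧸ lowIndexCore n X ≃* Y ⧸ lowIndexCore n Y)) :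
    ∃ u : ∀ n, X ⧸ lowIndexCore n X ≃* Y ⧸ lowIndexCore n Y, ∀ n x,
      u n (lowIndexQuotientMap X n.le_succ x) = lowIndexQuotientMap Y n.le_succ (u (n + 1) x) := by
  let F : ℕᵒᵖ ⥤ Type _ :=
    { obj n := X ⧸ lowIndexCore (unop n) X ≃* Y ⧸ lowIndexCore (unop n) Y
      map h := ↾(lowIndexDescend hX hY (leOfHom h.unop))
      map_id _ := by ext f x; exact DFunLike.congr_fun (lowIndexDescend_refl hX hY f) x
      map_comp h₁ h₂ := by
        ext f x
        exact DFunLike.congr_fun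
          (lowIndexDescend_trans hX hY (leOfHom h₂.unop) (leOfHom h₁.unop) f).symm x }
  have (n : ℕᵒᵖ) : Finite (F.obj n) :=
    have := Subgroup.quotient_finite_of_isOpen _ (isOpen_lowIndexCore hX (unop n))
    have := Subgroup.quotient_finite_of_isOpen _ (isOpen_lowIndexCore hY (unop n))
    Finite.of_injective _ DFunLike.coe_injective
  have (n : ℕᵒᵖ) : Nonempty (F.obj n) := hne (unop n)
  obtain ⟨u, hu⟩ := nonempty_sections_of_finite_inverse_system F
  refine ⟨fun n => u (op n), fun n x => ?_⟩
  induction x using QuotientGroup.induction_on with | H x => ?_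
  change u (op n) x = _
  rw [← hu (homOfLE n.le_succ).op]
  exact lowIndexDescend_mk hX hY _ _ x

end Quotient

section Profinite

variable {A : Type*} [Group A] [TopologicalSpace A] [IsTopologicalGroup A] [CompactSpace A]

lemma exists_lowIndexCore_subset [T2Space A] [TotallyDisconnectedSpace A] {U : Set A}
    (hU : U ∈ 𝓝 1) : ∃ n, (lowIndexCore n A : Set A) ⊆ U := by
  obtain ⟨V, hVU, hV, hV1⟩ := mem_nhds_iff.1 hU
  obtain ⟨W, hW, hW1, hWV⟩ := compact_exists_isClopen_in_isOpen hV hV1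
  obtain ⟨H, hHW⟩ := IsTopologicalGroup.exist_openNormalSubgroup_sub_clopen_nhds_of_one hW hW1
  have := Subgroup.quotient_finite_of_isOpen _ H.isOpen'
  refine ⟨H.toSubgroup.index, fun x hx => hVU (hWV (hHW ?_))⟩
  exact lowIndexCore_le ⟨H.isNormal', H.isOpen', le_rfl, Subgroup.index_ne_zero_of_finite⟩ hx

lemma eq_of_forall_mk_lowIndexCore_eq [T2Space A] [TotallyDisconnectedSpace A] {a a' : A}
    (h : ∀ n, (a : A ⧸ lowIndexCore n A) = a') : a = a' := by
  by_contra hne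
  obtain ⟨n, hn⟩ := exists_lowIndexCore_subset
    (isOpen_compl_singleton.mem_nhds (Ne.symm (inv_mul_eq_one.not.2 hne)) : {a⁻¹ * a'}ᶜ ∈ 𝓝 1)
  exact hn (QuotientGroup.eq.1 (h n)) rfl

lemma exists_forall_mk_lowIndexCore_eq (y : ∀ n, A ⧸ lowIndexCore n A)
    (hy : ∀ n, lowIndexQuotientMap A n.le_succ (y (n + 1)) = y n) :
    ∃ a : A, ∀ n, (a : A ⧸ lowIndexCore n A) = y n := by
  have hclosed (n : ℕ) : IsClosed (QuotientGroup.mk ⁻¹' {y n} : Set A) :=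
    have := QuotientGroup.t1Space_iff.2 (isClosed_lowIndexCore (G := A) n)
    isClosed_singleton.preimage QuotientGroup.continuous_mk
  obtain ⟨a, ha⟩ := IsCompact.nonempty_iInter_of_sequence_nonempty_isCompact_isClosed
    (fun n => QuotientGroup.mk ⁻¹' {y n})
    (fun n a ha => by
      rw [Set.mem_preimage, Set.mem_singleton_iff] at ha ⊢
      rw [← hy n, ← ha, lowIndexQuotientMap_mk]) (fun n => QuotientGroup.mk_surjective (y n))
    (hclosed 0).isCompact hclosed
  exact ⟨a, Set.mem_iInter.1 ha⟩

lemma continuous_of_lowIndexCore_le_comap [T2Space A] [TotallyDisconnectedSpace A] {X : Type*}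
    [Group X] [TopologicalSpace X] [IsTopologicalGroup X] (hX : SmallGroup X) (φ : X →* A)
    (hφ : ∀ n, lowIndexCore n X ≤ (lowIndexCore n A).comap φ) :
    Continuous φ := by
  refine continuous_of_continuousAt_one φ ?_
  rw [ContinuousAt, map_one]
  intro U hU
  obtain ⟨n, hn⟩ := exists_lowIndexCore_subset hU
  exact Filter.mem_map.2 (Filter.mem_of_superset ((isOpen_lowIndexCore hX n).mem_nhds (one_mem _))
    fun x hx => hn (hφ n hx))

variable {B : Type*} [Group B] [TopologicalSpace B] [IsTopologicalGroup B] [CompactSpace B]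
  [T2Space B] [TotallyDisconnectedSpace B]

lemma isTopIso_of_compatible [T2Space A] [TotallyDisconnectedSpace A] (hA : SmallGroup A)
    (u : ∀ n, A ⧸ lowIndexCore n A ≃* B ⧸ lowIndexCore n B)
    (hu : ∀ n x, u n (lowIndexQuotientMap A n.le_succ x) =
      lowIndexQuotientMap B n.le_succ (u (n + 1) x)) :
    IsTopIso A B := by
  have hu_symm (n : ℕ) (y) : (u n).symm (lowIndexQuotientMap B n.le_succ y) =
      lowIndexQuotientMap A n.le_succ ((u (n + 1)).symm y) := by
    rw [MulEquiv.symm_apply_eq, hu, MulEquiv.apply_symm_apply]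
  choose φ hφ using fun a : A => exists_forall_mk_lowIndexCore_eq (fun n => u n a)
    fun n => by rw [← hu, lowIndexQuotientMap_mk]
  have hφ_mul (a a' : A) : φ (a * a') = φ a * φ a' :=
    eq_of_forall_mk_lowIndexCore_eq fun n => by
      rw [QuotientGroup.mk_mul, hφ, hφ, hφ, QuotientGroup.mk_mul, map_mul]
  let f : A →* B := MonoidHom.mk' φ hφ_mul
  have hf_inj : Injective f := fun a a' h => eq_of_forall_mk_lowIndexCore_eq fun n =>
    (u n).injective (by rw [← hφ, ← hφ]; exact congrArg _ h)
  have hf_surj : Surjective f := fun b => by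
    obtain ⟨a, ha⟩ := exists_forall_mk_lowIndexCore_eq (fun n => (u n).symm b)
      fun n => by rw [← hu_symm, lowIndexQuotientMap_mk]
    refine ⟨a, eq_of_forall_mk_lowIndexCore_eq fun n => ?_⟩
    rw [MonoidHom.mk'_apply, hφ, ha, MulEquiv.apply_symm_apply]
  have hf_cont : Continuous f := continuous_of_lowIndexCore_le_comap hA f fun n a ha => by
    rw [Subgroup.mem_comap, ← QuotientGroup.eq_one_iff, MonoidHom.mk'_apply, hφ,
      (QuotientGroup.eq_one_iff a).2 ha, map_one]
  let e := MulEquiv.ofBijective f ⟨hf_inj, hf_surj⟩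
  exact ⟨e, hf_cont, (Continuous.homeoOfEquivCompactToT2 (f := e.toEquiv) hf_cont).symm.continuous⟩

end Profinite

lemma nonempty_mulEquiv_lowIndexQuotient {G A B : Type u} [Group G] [TopologicalSpace G]
    [IsTopologicalGroup G] [CompactSpace G] [Group A] [TopologicalSpace A] [IsTopologicalGroup A]
    [CompactSpace A] [Group B] [TopologicalSpace B] [IsTopologicalGroup B] [CompactSpace B]
    (hG : SmallGroup G) (hA : SmallGroup A) (hB : SmallGroup B) {e : G × A ≃* G × B}
    (he : Continuous e) (he' : Continuous e.symm) (n : ℕ) :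
    Nonempty (A ⧸ lowIndexCore n A ≃* B ⧸ lowIndexCore n B) := by
  have := Subgroup.quotient_finite_of_isOpen _ (isOpen_lowIndexCore hG n)
  have := Subgroup.quotient_finite_of_isOpen _ (isOpen_lowIndexCore hA n)
  have := Subgroup.quotient_finite_of_isOpen _ (isOpen_lowIndexCore hB n)
  have hmap : ((lowIndexCore n G).prod (lowIndexCore n A)).map (e : G × A →* G × B) =
      (lowIndexCore n G).prod (lowIndexCore n B) := by
    rw [← lowIndexCore_prod, ← lowIndexCore_prod]
    exact map_lowIndexCore_of_continuous he he' n
  exact nonempty_mulEquiv_of_prod_mulEquiv_prod <| (QuotientGroup.prodMulEquiv _ _).symm.trans <|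
    (QuotientGroup.congr _ _ e hmap).trans (QuotientGroup.prodMulEquiv _ _)

theorem smallProfinite_cancellation_general (G A B : Type)
    [Group G] [TopologicalSpace G] [IsTopologicalGroup G] [CompactSpace G]
    [Group A] [TopologicalSpace A] [IsTopologicalGroup A] [CompactSpace A] [T2Space A]
    [TotallyDisconnectedSpace A]
    [Group B] [TopologicalSpace B] [IsTopologicalGroup B] [CompactSpace B] [T2Space B]
    [TotallyDisconnectedSpace B]
    (hG : SmallGroup G) (hA : SmallGroup A) (hB : SmallGroup B)
    (h : IsTopIso (G × A) (G × B)) :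
    IsTopIso A B := by
  obtain ⟨e, he, he'⟩ := h
  obtain ⟨u, hu⟩ := exists_compatible_lowIndexQuotient_mulEquiv hA hB
    (nonempty_mulEquiv_lowIndexQuotient hG hA hB he he')
  exact isTopIso_of_compatible hA u hu

/-- Small profinite groups can be cancelled in direct products of
small profinite groups. -/
theorem smallProfinite_cancellation (G A B : Type)
    [Group G] [TopologicalSpace G] [IsTopologicalGroup G] [CompactSpace G] [T2Space G]
    [TotallyDisconnectedSpace G]
    [Group A] [TopologicalSpace A] [IsTopologicalGroup A] [CompactSpace A] [T2Space A]
    [TotallyDisconnectedSpace A]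
    [Group B] [TopologicalSpace B] [IsTopologicalGroup B] [CompactSpace B] [T2Space B]
    [TotallyDisconnectedSpace B]
    (hG : SmallGroup G) (hA : SmallGroup A) (hB : SmallGroup B)
    (h : IsTopIso (G × A) (G × B)) :
    IsTopIso A B :=
  smallProfinite_cancellation_general G A B hG hA hB h
end

section
/- There exists an abelian profinite group G such that G is not topologically isomorphic to any direct product ∏_{i∈I} G_i of indecomposable profinite groups (over any index set I). -/
/-!
Take for `S` the closed subgroup of `∏ⱼ ℤ/2^(j+2)` of sequences whose coordinates all have the
same parity. Torsion elements have even coordinates, since an odd coordinate `cⱼ` is a unit, of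
additive order `2^(j+2)`. So `x = (1, 1, …)` is not in the closure of the torsion, while
`2x = lim (2, …, 2, 0, …)` is. Closures of torsion commute with products, so if `S ≅ ∏ Fᵢ` then
some factor `F` contains a coordinate of `x` which is not in the closure of the torsion of `F`
although its square is; hence `F` is infinite and has nontrivial torsion.

`F` is a retract of `S` and contains an element `σ` of prime order, necessarily `2`. If `h` is
the first nonzero coordinate of `σ`, then `σ = 2^h s` with `s ∈ F` (apply the retraction), and
the homomorphism "half the difference of the coordinates `h` and `h + 1`" takes a unit value
on `s`. Restricted to `F` it is onto `ℤ/2^(h+1)` with a section through `s`, so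
`F ≅ K × ℤ/2^(h+1)`, and indecomposability makes `F` finite, a contradiction.
-/
open Multiplicative

theorem ZMod.isUnit_of_odd_val {k : ℕ} {x : ZMod (2 ^ k)} (hx : Odd x.val) : IsUnit x := by
  rw [← ZMod.natCast_zmod_val x, ZMod.isUnit_iff_coprime]
  exact hx.coprime_two_right.pow_right k

theorem ZMod.isUnit_of_two_pow_nsmul_ne_zero {h : ℕ} {x : ZMod (2 ^ (h + 1))}
    (hx : 2 ^ h • x ≠ 0) : IsUnit x := by
  refine ZMod.isUnit_of_odd_val (Nat.not_even_iff_odd.mp fun ⟨k, hk⟩ => hx ?_)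
  rw [← ZMod.natCast_zmod_val x, nsmul_eq_mul, ← Nat.cast_mul,
    ZMod.natCast_eq_zero_iff, hk, pow_succ]
  exact ⟨k, by ring⟩

theorem ZMod.intCast_val_add_sub_dvd {n : ℕ} [NeZero n] (x y : ZMod n) :
    (n : ℤ) ∣ ((x + y).val : ℤ) - x.val - y.val := by
  rw [← ZMod.intCast_zmod_eq_zero_iff_dvd]
  push_cast [ZMod.natCast_zmod_val]
  ring

theorem ZMod.two_pow_ne_zero (h : ℕ) : (2 ^ h : ZMod (2 ^ (h + 1))) ≠ 0 := by
  have : ((2 ^ h : ℕ) : ZMod (2 ^ (h + 1))) ≠ 0 := by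
    rw [Ne, ZMod.natCast_eq_zero_iff, Nat.pow_dvd_pow_iff_le_right (by norm_num)]
    omega
  exact_mod_cast this

theorem ZMod.eq_zero_or_val_eq_of_two_nsmul_eq_zero {j : ℕ} {x : ZMod (2 ^ (j + 2))}
    (hx : 2 • x = 0) : x = 0 ∨ x.val = 2 ^ (j + 1) := by
  rw [← ZMod.natCast_zmod_val x, nsmul_eq_mul, ← Nat.cast_mul, ZMod.natCast_eq_zero_iff] at hx
  have hx' : 2 ^ (j + 1) * 2 ∣ x.val * 2 :=
    calc 2 ^ (j + 1) * 2 = 2 ^ (j + 2) := by ring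
      _ ∣ 2 * x.val := hx
      _ = x.val * 2 := mul_comm _ _
  obtain ⟨t, ht⟩ := (Nat.mul_dvd_mul_iff_right two_pos).mp hx'
  have hlt : x.val < 2 ^ (j + 1) * 2 := (ZMod.val_lt x).trans_eq (by ring)
  rw [ht] at hlt ⊢
  obtain rfl | rfl : t = 0 ∨ t = 1 := by
    have := Nat.lt_of_mul_lt_mul_left hlt
    omega
  · exact .inl ((ZMod.val_eq_zero x).mp (by simpa using ht))
  · exact .inr (mul_one _)

theorem mem_closure_setOf_isOfFinOrder_pi {ι : Type*} {G : ι → Type*} [∀ i, Group (G i)]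
    [∀ i, TopologicalSpace (G i)] {x : ∀ i, G i}
    (hx : ∀ i, x i ∈ closure {y : G i | IsOfFinOrder y}) :
    x ∈ closure {y : ∀ i, G i | IsOfFinOrder y} := by
  classical
  refine mem_closure_iff.mpr fun U hU hxU => ?_
  obtain ⟨J, u, hu, hJU⟩ := isOpen_pi_iff.mp hU x hxU
  have : ∀ i ∈ J, ∃ t ∈ u i, IsOfFinOrder t := fun i hi =>
    mem_closure_iff.mp (hx i) (u i) (hu i hi).1 (hu i hi).2
  choose t htu ht using this
  set y : ∀ i, G i := fun i => if hi : i ∈ J then t i hi else 1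
  refine ⟨y, hJU fun i (hi : i ∈ J) => by simpa [y, hi] using htu i hi, ?_⟩
  refine isOfFinOrder_iff_pow_eq_one.mpr
    ⟨∏ i ∈ J.attach, orderOf (t i i.2), Finset.prod_pos fun i _ => (ht i i.2).orderOf_pos, ?_⟩
  funext i
  by_cases hi : i ∈ J
  · simp only [Pi.pow_apply, y, dif_pos hi, Pi.one_apply]
    exact orderOf_dvd_iff_pow_eq_one.mp
      (Finset.dvd_prod_of_mem (fun i : J => orderOf (t i i.2)) (Finset.mem_attach J ⟨i, hi⟩))
  · simp [y, hi]

theorem MonoidHom.map_mem_closure_setOf_isOfFinOrder {G H : Type*} [Monoid G] [Monoid H]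
    [TopologicalSpace G] [TopologicalSpace H] (f : G →* H) (hf : Continuous f) {y : G}
    (hy : y ∈ closure {y : G | IsOfFinOrder y}) : f y ∈ closure {z : H | IsOfFinOrder z} :=
  map_mem_closure hf hy fun _ => f.isOfFinOrder

theorem exists_apply_notMem_closure_setOf_isOfFinOrder {ι : Type*} {G : ι → Type*}
    [∀ i, Group (G i)] [∀ i, TopologicalSpace (G i)] {x : ∀ i, G i}
    (hx : x ∉ closure {y : ∀ i, G i | IsOfFinOrder y})
    (hx2 : x ^ 2 ∈ closure {y : ∀ i, G i | IsOfFinOrder y}) :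
    ∃ i, x i ∉ closure {y : G i | IsOfFinOrder y} ∧
      x i ^ 2 ∈ closure {y : G i | IsOfFinOrder y} := by
  obtain ⟨i, hi⟩ : ∃ i, x i ∉ closure {y : G i | IsOfFinOrder y} := by
    by_contra! h
    exact hx (mem_closure_setOf_isOfFinOrder_pi h)
  exact ⟨i, hi, (Pi.evalMonoidHom G i).map_mem_closure_setOf_isOfFinOrder (continuous_apply i) hx2⟩

theorem exists_isOfFinOrder_ne_one_of_sq_mem_closure {G : Type*} [Group G] [TopologicalSpace G]
    [T1Space G] {x : G} (hx : x ∉ closure {y : G | IsOfFinOrder y})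
    (hx2 : x ^ 2 ∈ closure {y : G | IsOfFinOrder y}) : ∃ t : G, IsOfFinOrder t ∧ t ≠ 1 := by
  by_contra! htors
  have : x ^ 2 = 1 := closure_minimal htors isClosed_singleton hx2
  exact hx (subset_closure (isOfFinOrder_iff_pow_eq_one.mpr ⟨2, two_pos, this⟩))

theorem MonoidHom.exists_comp_eq_id_of_isUnit {F : Type*} [Group F] {n : ℕ} [NeZero n]
    (g : F →* Multiplicative (ZMod n)) {w : F} (hw : w ^ n = 1) (hu : IsUnit (g w).toAdd) :
    ∃ s : Multiplicative (ZMod n) →* F, g.comp s = MonoidHom.id _ := by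
  -- replace `w` by a power on which `g` takes the value `1`
  set v := w ^ (hu.unit⁻¹ : (ZMod n)ˣ).val.val
  have hv : v ^ n = 1 := by rw [← pow_mul, mul_comm, pow_mul, hw, one_pow]
  have hgv : g v = ofAdd 1 := by
    apply toAdd.injective
    rw [map_pow, toAdd_pow, nsmul_eq_mul, ZMod.natCast_zmod_val, IsUnit.val_inv_mul,
      toAdd_ofAdd]
  have hpow : ∀ k, v ^ (k % n) = v ^ k := fun k => by
    rw [← pow_mod_orderOf v (k % n), Nat.mod_mod_of_dvd _ (orderOf_dvd_of_pow_eq_one hv),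
      pow_mod_orderOf]
  refine ⟨{ toFun := fun z => v ^ z.toAdd.val
            map_one' := by simp
            map_mul' := fun a b => by simp only [toAdd_mul, ZMod.val_add, hpow, pow_add] }, ?_⟩
  ext z
  simp [hgv]

theorem Indecomposable.injective_of_comp_eq_id {F C : Type} [CommGroup F] [TopologicalSpace F]
    [IsTopologicalGroup F] [CompactSpace F] [T2Space F] [TotallyDisconnectedSpace F]
    [Group C] [TopologicalSpace C] [DiscreteTopology C] [Finite C] [Nontrivial C]
    (hF : Indecomposable F) {g : F →* C} (hg : Continuous g) {s : C →* F}
    (hs : g.comp s = MonoidHom.id C) : Function.Injective g := by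
  have hgs : ∀ c, g (s c) = c := DFunLike.congr_fun hs
  have : CompactSpace g.ker := isCompact_iff_compactSpace.mp
    (isClosed_singleton.preimage hg).isCompact
  let e : F ≃* g.ker × C :=
    { toFun := fun x => (⟨x * (s (g x))⁻¹, by simp [hgs]⟩, g x)
      invFun := fun p => p.1 * s p.2
      left_inv := fun x => by simp
      right_inv := fun p => by ext <;> simp [hgs, MonoidHom.mem_ker.mp p.1.2]
      map_mul' := fun x y => by
        ext <;> simp only [map_mul, mul_inv, mul_mul_mul_comm, Subgroup.coe_mul, Prod.fst_mul,
          Prod.snd_mul] }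
  have hsc : Continuous s := continuous_of_discreteTopology
  have he : Continuous e :=
    ((continuous_id.mul (hsc.comp hg).inv).subtype_mk _).prodMk hg
  have he' : Continuous e.symm :=
    (continuous_subtype_val.comp continuous_fst).mul (hsc.comp continuous_snd)
  rcases hF _ _ ⟨e, he, he'⟩ with hker | hC
  · refine (injective_iff_map_eq_one g).mpr fun x hx => ?_
    simpa using congrArg Subtype.val (hker ⟨x, hx⟩)
  · obtain ⟨c, hc⟩ := exists_ne (1 : C)
    exact absurd (hC c) hc

namespace ConstParity

abbrev Ambient : Type := ∀ j : ℕ, ZMod (2 ^ (j + 2))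

def parity (j : ℕ) : ZMod (2 ^ (j + 2)) →+* ZMod 2 :=
  ZMod.castHom (dvd_pow_self 2 (by omega)) _

theorem parity_apply (j : ℕ) (x : ZMod (2 ^ (j + 2))) : parity j x = (x.val : ZMod 2) := by
  rw [parity, ZMod.castHom_apply, ZMod.natCast_val]

def S : AddSubgroup Ambient where
  carrier := {c | ∀ j, parity j (c j) = parity 0 (c 0)}
  zero_mem' _ := by simp
  add_mem' ha hb j := by simp [ha j, hb j]
  neg_mem' ha j := by simp [ha j]

theorem isClosed_S : IsClosed (S : Set Ambient) := by
  simp only [S, AddSubgroup.coe_set_mk, AddSubmonoid.coe_set_mk, AddSubsemigroup.coe_set_mk,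
    Set.ofPred_forall]
  exact isClosed_iInter fun j => isClosed_eq (continuous_of_discreteTopology.comp
    (continuous_apply j)) (continuous_of_discreteTopology.comp (continuous_apply 0))

instance : CoeFun S fun _ => Ambient := ⟨Subtype.val⟩

instance : CompactSpace S := isCompact_iff_compactSpace.mp isClosed_S.isCompact

theorem parity_eq (c : S) (j : ℕ) : parity j (c j) = parity 0 (c 0) := c.2 j

theorem exists_apply_ne_zero {σ : S} (hσ : σ ≠ 0) : ∃ j, σ j ≠ 0 := by
  by_contra! h
  exact hσ (Subtype.ext (funext h))

def diagOne : S := ⟨fun _ => 1, fun j => by simp⟩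

theorem parity_eq_zero_of_isOfFinAddOrder {c : S} (hc : IsOfFinAddOrder c) (j : ℕ) :
    parity j (c j) = 0 := by
  obtain ⟨n, hn, hnc⟩ := isOfFinAddOrder_iff_nsmul_eq_zero.mp hc
  rw [parity_eq]
  by_contra hodd
  -- an odd coordinate is a unit, so `n` would vanish modulo `2 ^ (n + 2)`
  have hunit : IsUnit (c n) := by
    refine ZMod.isUnit_of_odd_val (Nat.not_even_iff_odd.mp fun he => hodd ?_)
    rwa [← parity_eq c n, parity_apply, ZMod.natCast_eq_zero_iff_even]
  have hcn : (n : ZMod (2 ^ (n + 2))) * c n = 0 := by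
    rw [← nsmul_eq_mul]
    exact congrFun (congrArg Subtype.val hnc) n
  have hdvd := (ZMod.natCast_eq_zero_iff _ _).mp (hunit.mul_left_eq_zero.mp hcn)
  have := Nat.le_of_dvd hn hdvd
  have := Nat.lt_two_pow_self (n := n + 2)
  omega

theorem ofAdd_diagOne_notMem_closure :
    ofAdd diagOne ∉ closure {y : Multiplicative S | IsOfFinOrder y} := by
  have hclosed : IsClosed {y : Multiplicative S | parity 0 (toAdd y 0) = 0} :=
    isClosed_eq (continuous_of_discreteTopology.comp
      ((continuous_apply 0).comp (continuous_subtype_val.comp continuous_toAdd))) continuous_const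
  intro hmem
  have : parity 0 (diagOne 0) = 0 := closure_minimal (fun y hy =>
    parity_eq_zero_of_isOfFinAddOrder ((isOfFinOrder_ofAdd_iff (x := toAdd y)).mp hy) 0)
    hclosed hmem
  simp [diagOne] at this

theorem parity_two (j : ℕ) : parity j 2 = 0 := by
  rw [map_ofNat]
  rfl

def twoUpTo (m : ℕ) : S :=
  ⟨fun j => if j < m then 2 else 0, fun j => by
    dsimp only
    split_ifs <;> simp only [parity_two, map_zero]⟩

theorem isOfFinAddOrder_twoUpTo (m : ℕ) : IsOfFinAddOrder (twoUpTo m) := by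
  refine isOfFinAddOrder_iff_nsmul_eq_zero.mpr ⟨2 ^ (m + 1), by positivity, ?_⟩
  refine Subtype.ext (funext fun j => ?_)
  change 2 ^ (m + 1) • (if j < m then (2 : ZMod (2 ^ (j + 2))) else 0) = 0
  split_ifs with hj
  · have : ((2 ^ (m + 2) : ℕ) : ZMod (2 ^ (j + 2))) = 0 :=
      (ZMod.natCast_eq_zero_iff _ _).mpr (pow_dvd_pow 2 (by omega))
    rw [nsmul_eq_mul, ← this]
    push_cast
    ring
  · exact smul_zero _

theorem ofAdd_diagOne_sq_mem_closure :
    ofAdd diagOne ^ 2 ∈ closure {y : Multiplicative S | IsOfFinOrder y} := by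
  refine mem_closure_of_tendsto (f := fun m => ofAdd (twoUpTo m)) (b := Filter.atTop)
    ?_ (.of_forall fun m => isOfFinOrder_ofAdd_iff.mpr (isOfFinAddOrder_twoUpTo m))
  rw [← ofAdd_nsmul]
  refine (continuous_ofAdd.tendsto _).comp (tendsto_subtype_rng.mpr (tendsto_pi_nhds.mpr fun j =>
    tendsto_atTop_of_eventually_const (i₀ := j + 1) fun m hm => ?_))
  simp [twoUpTo, diagOne, show j < m by omega]

def coordDiff (h : ℕ) (c : S) : ℤ := (c h).val - (c (h + 1)).val

theorem two_dvd_coordDiff (h : ℕ) (c : S) : 2 ∣ coordDiff h c := by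
  refine (ZMod.intCast_zmod_eq_zero_iff_dvd _ 2).mp ?_
  push_cast [coordDiff]
  rw [← parity_apply, ← parity_apply, parity_eq c h, parity_eq c (h + 1), sub_self]

theorem coordDiff_add_dvd (h : ℕ) (a b : S) :
    2 ^ (h + 2) ∣ coordDiff h (a + b) - coordDiff h a - coordDiff h b := by
  have h₀ := ZMod.intCast_val_add_sub_dvd (a h) (b h)
  have h₁ := (pow_dvd_pow 2 (by omega : h + 2 ≤ h + 1 + 2)).natCast.trans
    (ZMod.intCast_val_add_sub_dvd (a (h + 1)) (b (h + 1)))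
  push_cast at h₀ h₁
  refine (dvd_sub h₀ h₁).trans (dvd_of_eq ?_)
  simp only [coordDiff, AddSubgroup.coe_add, Pi.add_apply]
  ring

def detector (h : ℕ) : S →+ ZMod (2 ^ (h + 1)) where
  toFun c := ((coordDiff h c / 2 : ℤ) : ZMod (2 ^ (h + 1)))
  map_zero' := by simp [coordDiff]
  map_add' a b := by
    obtain ⟨p, hp⟩ := two_dvd_coordDiff h a
    obtain ⟨q, hq⟩ := two_dvd_coordDiff h b
    obtain ⟨r, hr⟩ := two_dvd_coordDiff h (a + b)
    have hdvd := coordDiff_add_dvd h a b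
    rw [hp, hq, hr, ← mul_sub, ← mul_sub, pow_succ' 2 (h + 1),
      mul_dvd_mul_iff_left two_ne_zero] at hdvd
    have := (ZMod.intCast_zmod_eq_zero_iff_dvd _ (2 ^ (h + 1))).mpr (by exact_mod_cast hdvd)
    simp only [hp, hq, hr, Int.mul_ediv_cancel_left _ two_ne_zero]
    push_cast at this
    linear_combination this

theorem continuous_detector (h : ℕ) : Continuous (detector h) := by
  have hpair : Continuous fun c : S => (c h, c (h + 1)) :=
    ((continuous_apply h).comp continuous_subtype_val).prodMk
      ((continuous_apply (h + 1)).comp continuous_subtype_val)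
  exact (continuous_of_discreteTopology
    (f := fun q : ZMod (2 ^ (h + 2)) × ZMod (2 ^ (h + 1 + 2)) =>
      (((q.1.val - q.2.val : ℤ) / 2 : ℤ) : ZMod (2 ^ (h + 1))))).comp hpair

theorem two_nsmul_eq_zero_of_prime_nsmul {p : ℕ} [hp : Fact p.Prime] {σ : S} (hσ : σ ≠ 0)
    (hpσ : p • σ = 0) : 2 • σ = 0 := by
  obtain ⟨j, hj⟩ := exists_apply_ne_zero hσ
  have horder := addOrderOf_eq_prime (congrFun (congrArg Subtype.val hpσ) j) hj
  have hdvd : p ∣ 2 ^ (j + 2) :=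
    horder ▸ addOrderOf_dvd_of_nsmul_eq_zero (by simp [nsmul_eq_mul])
  rwa [(Nat.prime_dvd_prime_iff_eq hp.out Nat.prime_two).mp (hp.out.dvd_of_dvd_pow hdvd)] at hpσ

theorem detector_eq_two_pow {σ : S} (h2σ : 2 • σ = 0) {h : ℕ} (hσh : (σ h).val = 2 ^ (h + 1)) :
    detector h σ = 2 ^ h := by
  have hcast : (2 : ZMod (2 ^ (h + 1))) ^ (h + 1) = 0 := by
    exact_mod_cast ZMod.natCast_self (2 ^ (h + 1))
  change (((((σ h).val : ℤ) - (σ (h + 1)).val) / 2 : ℤ) : ZMod (2 ^ (h + 1))) = _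
  rcases ZMod.eq_zero_or_val_eq_of_two_nsmul_eq_zero
    (congrFun (congrArg Subtype.val h2σ) (h + 1)) with h0 | h1
  · rw [h0, ZMod.val_zero, hσh, show ((2 ^ (h + 1) : ℕ) : ℤ) - (0 : ℕ) = 2 ^ h * 2 by
      push_cast; ring, Int.mul_ediv_cancel _ two_ne_zero]
    push_cast
    rfl
  · rw [h1, hσh, show ((2 ^ (h + 1) : ℕ) : ℤ) - (2 ^ (h + 1 + 1) : ℕ) = (2 ^ h - 2 ^ (h + 1)) * 2
      by push_cast; ring, Int.mul_ediv_cancel _ two_ne_zero]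
    push_cast
    rw [hcast, sub_zero]

theorem exists_two_pow_nsmul_eq_and_detector_ne_zero {σ : S} (hσ : σ ≠ 0) (h2σ : 2 • σ = 0) :
    ∃ h, ∃ s : S, 2 ^ h • s = σ ∧ detector h σ ≠ 0 := by
  classical
  have hex := exists_apply_ne_zero hσ
  set h := Nat.find hex
  have hlow : ∀ j, σ j ≠ 0 → h ≤ j := fun j hj => Nat.find_min' hex hj
  have hsoc : ∀ j, σ j = 0 ∨ (σ j).val = 2 ^ (j + 1) := fun j =>
    ZMod.eq_zero_or_val_eq_of_two_nsmul_eq_zero (congrFun (congrArg Subtype.val h2σ) j)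
  have hσh : (σ h).val = 2 ^ (h + 1) := (hsoc h).resolve_left (Nat.find_spec hex)
  refine ⟨h, ⟨fun j => if σ j = 0 then 0 else 2 ^ (j + 1 - h), fun j => ?_⟩, ?_, ?_⟩
  · have heven : ∀ j, parity j (if σ j = 0 then 0 else 2 ^ (j + 1 - h)) = 0 := fun j => by
      split_ifs with hj
      · exact map_zero _
      · rw [map_pow, parity_two, zero_pow (by have := hlow j hj; omega)]
    rw [heven, heven]
  · refine Subtype.ext (funext fun j => ?_)
    change 2 ^ h • (if σ j = 0 then 0 else 2 ^ (j + 1 - h)) = σ j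
    split_ifs with hj
    · rw [hj, smul_zero]
    · rw [← ZMod.natCast_zmod_val (σ j), (hsoc j).resolve_left hj, nsmul_eq_mul]
      push_cast
      rw [← pow_add]
      congr 1
      have := hlow j hj
      omega
  · exact detector_eq_two_pow h2σ hσh ▸ ZMod.two_pow_ne_zero h

theorem exists_isUnit_detector {p : ℕ} [Fact p.Prime] {σ : S} (hσ : σ ≠ 0) (hpσ : p • σ = 0)
    (π : S →+ S) (hπ : π σ = σ) :
    ∃ h, ∃ s : S, 2 ^ (h + 1) • π s = 0 ∧ IsUnit (detector h (π s)) := by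
  have h2σ := two_nsmul_eq_zero_of_prime_nsmul hσ hpσ
  obtain ⟨h, s, hs, hdet⟩ := exists_two_pow_nsmul_eq_and_detector_ne_zero hσ h2σ
  have hπs : 2 ^ h • π s = σ := by rw [← map_nsmul, hs, hπ]
  refine ⟨h, s, by rw [pow_succ, mul_nsmul, hπs, h2σ], ZMod.isUnit_of_two_pow_nsmul_ne_zero ?_⟩
  rwa [← map_nsmul, hπs]

theorem finite_of_retract {F : Type} [Group F] [TopologicalSpace F] [IsTopologicalGroup F]
    [CompactSpace F] [T2Space F] [TotallyDisconnectedSpace F] (hF : Indecomposable F)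
    {ψ : F →* Multiplicative S} (hψ : Continuous ψ) {ρ : Multiplicative S →* F}
    (hρψ : ∀ w, ρ (ψ w) = w) {t : F} (ht : IsOfFinOrder t) (ht1 : t ≠ 1) : Finite F := by
  have hψinj : Function.Injective ψ := Function.LeftInverse.injective hρψ
  let : CommGroup F := { mul_comm := fun a b => hψinj (by rw [map_mul, map_mul, mul_comm]) }
  set p := (orderOf t).minFac
  have hp : Fact p.Prime := ⟨Nat.minFac_prime (by rwa [Ne, orderOf_eq_one_iff])⟩
  set u := t ^ (orderOf t / p)
  have hu : orderOf u = p := orderOf_pow_orderOf_div ht.orderOf_pos.ne' (Nat.minFac_dvd _)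
  set σ : S := toAdd (ψ u)
  have hσ : σ ≠ 0 := fun h0 => hp.out.one_lt.ne'
    (hu ▸ orderOf_eq_one_iff.mpr (hψinj (by rw [map_one]; exact h0)))
  have hpσ : p • σ = 0 := by
    rw [← toAdd_pow, ← map_pow, ← hu, pow_orderOf_eq_one, map_one, toAdd_one]
  let π : S →+ S := MonoidHom.toAdditive (ψ.comp ρ)
  have hπ : π σ = σ := by
    change toAdd (ψ (ρ (ofAdd (toAdd (ψ u))))) = toAdd (ψ u)
    rw [ofAdd_toAdd, hρψ]
  obtain ⟨h, s, hs, hunit⟩ := exists_isUnit_detector hσ hpσ π hπ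
  let g : F →* Multiplicative (ZMod (2 ^ (h + 1))) := (detector h).toMultiplicative.comp ψ
  have hg : Continuous g :=
    continuous_ofAdd.comp ((continuous_detector h).comp (continuous_toAdd.comp hψ))
  have : Fact (1 < 2 ^ (h + 1)) := ⟨Nat.one_lt_two_pow (by omega)⟩
  have hw : ρ (ofAdd s) ^ 2 ^ (h + 1) = 1 := hψinj (by
    rw [map_pow, map_one]
    change ofAdd (π s) ^ 2 ^ (h + 1) = 1
    rw [← ofAdd_nsmul, hs, ofAdd_zero])
  obtain ⟨sec, hsec⟩ := g.exists_comp_eq_id_of_isUnit hw hunit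
  exact Finite.of_injective g (hF.injective_of_comp_eq_id hg hsec)

end ConstParity

open ConstParity in
/-- There is an abelian profinite group which is not topologically
isomorphic to any direct product of indecomposable profinite groups. -/
theorem exists_abelian_profinite_with_no_indecomposable_decomposition :
    ∃ G : ProfiniteGroup, (∀ a b : G.carrier, a * b = b * a) ∧
      ¬ ∃ (I : Type) (F : I → ProfiniteGroup),
          (∀ i, Indecomposable (F i).carrier) ∧
          IsTopIso G.carrier (∀ i, (F i).carrier) := by
  classical
  refine ⟨⟨Multiplicative S⟩, mul_comm, ?_⟩
  rintro ⟨I, F, hF, hiso⟩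
  obtain ⟨e, he, he'⟩ : IsTopIso (Multiplicative S) (∀ i, (F i).carrier) := hiso
  obtain ⟨i, hi, hi2⟩ := exists_apply_notMem_closure_setOf_isOfFinOrder (x := e (ofAdd diagOne))
    (fun hx => ofAdd_diagOne_notMem_closure (by
      simpa using e.symm.toMonoidHom.map_mem_closure_setOf_isOfFinOrder he' hx))
    (by simpa using
      e.toMonoidHom.map_mem_closure_setOf_isOfFinOrder he ofAdd_diagOne_sq_mem_closure)
  obtain ⟨t, ht, ht1⟩ := exists_isOfFinOrder_ne_one_of_sq_mem_closure hi hi2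
  let ψ := e.symm.toMonoidHom.comp (MonoidHom.mulSingle (fun i => (F i).carrier) i)
  let ρ := (Pi.evalMonoidHom (fun i => (F i).carrier) i).comp e.toMonoidHom
  have := finite_of_retract (hF i) (ψ := ψ)
    (he'.comp (continuous_mulSingle (A := fun i => (F i).carrier) i)) (ρ := ρ)
    (fun w => by simp [ψ, ρ]) ht ht1
  exact hi (subset_closure (isOfFinOrder_of_finite _))
end

section
/- Let G be a small indecomposable profinite group and let φ, ψ : G → G be normal continuous endomorphisms such that the map φ⊙ψ defined by (φ⊙ψ)(a) = φ(a)ψ(a) is an endomorphism of G. If φ⊙ψ is an automorphism of G, then φ or ψ is an automorphism of G. -/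
/-!
Put `f = φ ∘ e⁻¹` and `g = ψ ∘ e⁻¹`, where `e = φ ⊙ ψ`, so that `f a * g a = a`. The subgroups
`Mₙ` (intersection of the open normal subgroups of index `≤ n`) are open in a small group and
invariant under continuous endomorphisms. On `G ⧸ Mₙ`, Fitting's lemma for the normal endomorphism
`f` splits off the image and the kernel of a large power of `f`; by compactness these splittings
glue to a decomposition `G ≅ A × B` into closed normal subgroups. By indecomposability either all
kernel parts vanish, so `f` (hence `φ`) is bijective, or all image parts vanish, i.e. `f` is
nilpotent modulo every `Mₙ`; then `g = f⁻¹ · id` is injective modulo every `Mₙ`, hence bijective.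
A continuous bijective endomorphism of a compact Hausdorff group is a topological automorphism.
-/

open Subgroup

theorem Monotone.exists_forall_ge_eq_of_finite_range {α : Type*} [PartialOrder α] {a : ℕ → α}
    (ha : Monotone a) (hfin : (Set.range a).Finite) : ∃ K, ∀ L ≥ K, a L = a K := by
  obtain ⟨_, ⟨K, rfl⟩, hmax⟩ := hfin.exists_maximal (Set.range_nonempty a)
  exact ⟨K, fun L hL => le_antisymm (hmax ⟨L, rfl⟩ (ha hL)) (ha hL)⟩

theorem Antitone.diag_of_forall_ge_eq {α : Type*} [Preorder α] {S : ℕ → ℕ → α}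
    (hS : ∀ L, Antitone (S · L)) {K : ℕ → ℕ} (hK : ∀ n, ∀ L ≥ K n, S n L = S n (K n)) :
    Antitone fun n => S n (K n) := by
  intro m n hmn
  calc S n (K n) = S n (max (K m) (K n)) := (hK n _ (le_max_right _ _)).symm
    _ ≤ S m (max (K m) (K n)) := hS _ hmn
    _ = S m (K m) := hK m _ (le_max_left _ _)

namespace MonoidHom

variable {G : Type*} [Group G] (f : G →* G)

/-- `f ^ K` in `Monoid.End G`, retyped as `G →* G` so that `range` and `comap` apply. -/
def iterate (K : ℕ) : G →* G := (show Monoid.End G from f) ^ K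

@[simp]
theorem coe_iterate (K : ℕ) : ⇑(f.iterate K) = (⇑f)^[K] := rfl

theorem iterate_add_apply (K L : ℕ) (x : G) :
    f.iterate (K + L) x = f.iterate K (f.iterate L x) :=
  Function.iterate_add_apply _ K L x

theorem iterate_conj (hf : ∀ a b, f (a * b * a⁻¹) = a * f b * a⁻¹) (K : ℕ) (a b : G) :
    f.iterate K (a * b * a⁻¹) = a * f.iterate K b * a⁻¹ := by
  induction K with
  | zero => rfl
  | succ K ih => simp only [coe_iterate, Function.iterate_succ_apply'] at ih ⊢; rw [ih, hf]

theorem normal_range_iterate (hf : ∀ a b, f (a * b * a⁻¹) = a * f b * a⁻¹) (K : ℕ) :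
    (f.iterate K).range.Normal :=
  ⟨by rintro _ ⟨y, rfl⟩ a; exact ⟨a * y * a⁻¹, f.iterate_conj hf K a y⟩⟩

theorem range_sup_eq_top_of_comap_eq
    {M : Subgroup G} [M.Normal] [M.FiniteIndex] (h : M.comap f = M) : f.range ⊔ M = ⊤ := by
  -- an injective endomorphism of the finite group `G ⧸ M` is surjective, counted by indices
  have hindex := relIndex_mul_index (le_sup_right : M ≤ f.range ⊔ M)
  rw [relIndex_sup_right, ← index_comap, h] at hindex
  exact index_eq_one.1 ((mul_eq_left₀ FiniteIndex.index_ne_zero).1 hindex)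

theorem comap_le_of_range_iterate_le (g : G →* G)
    (hfg : ∀ x, f x * g x = x) {M : Subgroup G} (hfM : M ≤ M.comap f) {K : ℕ}
    (hK : (f.iterate K).range ≤ M) : M.comap g ≤ M := by
  intro x hx
  have hfx : x⁻¹ * f x ∈ M := by
    rw [← inv_inv (x⁻¹ * f x), mul_inv_rev, inv_inv, ← eq_inv_mul_of_mul_eq (hfg x)]
    exact inv_mem hx
  -- `g x ∈ M` says `f x ≡ x` modulo `M`, and `f` preserves `M`
  have hiter : ∀ j, x⁻¹ * f.iterate j x ∈ M := by
    intro j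
    induction j with
    | zero => simp
    | succ j ih =>
      have := mul_mem hfx (hfM ih)
      rw [map_mul, map_inv, mul_assoc, mul_inv_cancel_left] at this
      rwa [coe_iterate, Function.iterate_succ_apply', ← coe_iterate]
  simpa using mul_mem (hiter K) (inv_mem (hK ⟨x, rfl⟩))

end MonoidHom

section FittingLevel

variable {G : Type*} [Group G] (f : G →* G) (M : Subgroup G)

theorem antitone_range_iterate_sup : Antitone fun K => (f.iterate K).range ⊔ M := by
  intro K L hKL
  obtain ⟨d, rfl⟩ := Nat.exists_eq_add_of_le hKL
  refine sup_le_sup_right ?_ M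
  rintro _ ⟨y, rfl⟩
  exact ⟨f.iterate d y, (f.iterate_add_apply K d y).symm⟩

variable {M}

theorem le_comap_iterate (hfM : M ≤ M.comap f) (K : ℕ) : M ≤ M.comap (f.iterate K) := by
  induction K with
  | zero => exact fun x hx => hx
  | succ K ih =>
    intro x hx
    rw [mem_comap, MonoidHom.coe_iterate, Function.iterate_succ_apply']
    exact hfM (ih hx)

theorem monotone_comap_iterate (hfM : M ≤ M.comap f) :
    Monotone fun K => M.comap (f.iterate K) := by
  intro K L hKL x hx
  obtain ⟨d, rfl⟩ := Nat.exists_eq_add_of_le hKL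
  rw [mem_comap, add_comm, f.iterate_add_apply]
  exact le_comap_iterate f hfM d hx

theorem exists_forall_ge_range_iterate_sup_eq_and_comap_iterate_eq (hM : (Set.Ici M).Finite)
    (hfM : M ≤ M.comap f) : ∃ K, ∀ L ≥ K,
      (f.iterate L).range ⊔ M = (f.iterate K).range ⊔ M ∧
        M.comap (f.iterate L) = M.comap (f.iterate K) := by
  obtain ⟨K₁, hK₁⟩ :=
    (antitone_range_iterate_sup f M).dual_right.exists_forall_ge_eq_of_finite_range
      (hM.subset (Set.range_subset_iff.2 fun K => (le_sup_right : M ≤ _)))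
  obtain ⟨K₂, hK₂⟩ := (monotone_comap_iterate f hfM).exists_forall_ge_eq_of_finite_range
    (hM.subset (Set.range_subset_iff.2 (le_comap_iterate f hfM)))
  refine ⟨max K₁ K₂, fun L hL => ⟨?_, ?_⟩⟩
  · exact (hK₁ L (le_of_max_le_left hL)).trans (hK₁ _ (le_max_left _ _)).symm
  · exact (hK₂ L (le_of_max_le_right hL)).trans (hK₂ _ (le_max_right _ _)).symm

variable [M.Normal] {K : ℕ}

theorem range_iterate_sup_inf_comap_iterate (hfM : M ≤ M.comap f)
    (hK : M.comap (f.iterate (K + K)) = M.comap (f.iterate K)) :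
    ((f.iterate K).range ⊔ M) ⊓ M.comap (f.iterate K) = M := by
  refine le_antisymm ?_ (le_inf le_sup_right (le_comap_iterate f hfM K))
  rintro _ ⟨hzA, hzB⟩
  obtain ⟨_, ⟨y, rfl⟩, μ, hμ, rfl⟩ := mem_sup_of_normal_right.1 hzA
  have hy : y ∈ M.comap (f.iterate (K + K)) := by
    rw [mem_comap, f.iterate_add_apply, ← mul_inv_cancel_right (f.iterate K y) μ, map_mul,
      map_inv]
    exact mul_mem hzB (inv_mem (le_comap_iterate f hfM K hμ))
  exact mul_mem (hK ▸ hy : y ∈ M.comap (f.iterate K)) hμ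

theorem range_iterate_sup_sup_comap_iterate
    (hK : (f.iterate (K + K)).range ⊔ M = (f.iterate K).range ⊔ M) :
    (f.iterate K).range ⊔ M ⊔ M.comap (f.iterate K) = ⊤ := by
  refine eq_top_iff.2 fun a _ => ?_
  have ha : f.iterate K a ∈ (f.iterate (K + K)).range ⊔ M := by
    rw [hK]; exact mem_sup_left ⟨a, rfl⟩
  obtain ⟨_, ⟨b, rfl⟩, μ, hμ, hb⟩ := mem_sup_of_normal_right.1 ha
  rw [← mul_inv_cancel_left (f.iterate K b) a]
  refine mul_mem_sup (mem_sup_left ⟨b, rfl⟩) ?_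
  rw [mem_comap, map_mul, map_inv, ← f.iterate_add_apply, ← hb, inv_mul_cancel_left]
  exact hμ

end FittingLevel

/-- In a small profinite group these subgroups form a neighbourhood basis of `1` consisting of
open normal subgroups that are invariant under every continuous endomorphism. -/
def boundedIndexCore (G : Type*) [Group G] [TopologicalSpace G] (n : ℕ) : Subgroup G :=
  sInf {H : Subgroup G | H.Normal ∧ IsOpen (H : Set G) ∧ H.index ≤ n}

section BoundedIndexCore

variable {G : Type*} [Group G] [TopologicalSpace G]

theorem mem_boundedIndexCore {n : ℕ} {x : G} :
    x ∈ boundedIndexCore G n ↔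
      ∀ H : Subgroup G, H.Normal → IsOpen (H : Set G) → H.index ≤ n → x ∈ H := by
  simp only [boundedIndexCore, mem_sInf, Set.mem_ofPred_eq, and_imp]

instance boundedIndexCore_normal (n : ℕ) : (boundedIndexCore G n).Normal :=
  ⟨fun _ hx g => mem_boundedIndexCore.2 fun H hH hHo hHn =>
    hH.conj_mem _ (mem_boundedIndexCore.1 hx H hH hHo hHn) g⟩

theorem boundedIndexCore_antitone : Antitone (boundedIndexCore G) :=
  fun _ _ hmn => sInf_le_sInf fun _ hH => ⟨hH.1, hH.2.1, hH.2.2.trans hmn⟩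

theorem boundedIndexCore_index_le {H : Subgroup G} (hH : H.Normal) (hHo : IsOpen (H : Set G)) :
    boundedIndexCore G H.index ≤ H :=
  sInf_le ⟨hH, hHo, le_rfl⟩

theorem SmallGroup.isOpen_boundedIndexCore (hG : SmallGroup G) (n : ℕ) :
    IsOpen (boundedIndexCore G n : Set G) := by
  have hfin : {H : Subgroup G | H.Normal ∧ IsOpen (H : Set G) ∧ H.index ≤ n}.Finite :=
    ((Set.finite_Iic n).biUnion fun i _ => hG i).subset fun H hH =>
      Set.mem_biUnion hH.2.2 ⟨hH.1, hH.2.1, rfl⟩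
  rw [boundedIndexCore, coe_sInf]
  exact hfin.isOpen_biInter fun H hH => hH.2.1

variable [IsTopologicalGroup G] [CompactSpace G]

theorem boundedIndexCore_le_comap {f : G →* G} (hf : Continuous f) (n : ℕ) :
    boundedIndexCore G n ≤ (boundedIndexCore G n).comap f := by
  intro x hx
  refine mem_boundedIndexCore.2 fun H hH hHo hHn => mem_boundedIndexCore.1 hx _
    (hH.comap f) (hHo.preimage hf) (le_trans ?_ hHn)
  have : Finite (G ⧸ H) := quotient_finite_of_isOpen H hHo
  rw [index_comap]
  exact Nat.le_of_dvd (Nat.pos_of_ne_zero index_ne_zero_of_finite)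
    (relIndex_dvd_index_of_normal H _)

theorem SmallGroup.finite_Ici_boundedIndexCore (hG : SmallGroup G) (n : ℕ) :
    (Set.Ici (boundedIndexCore G n)).Finite := by
  have : Finite (G ⧸ boundedIndexCore G n) :=
    quotient_finite_of_isOpen _ (hG.isOpen_boundedIndexCore n)
  exact Set.finite_coe_iff.1 (Finite.of_equiv _ (QuotientGroup.comapMk'OrderIso _).toEquiv)

variable [TotallyDisconnectedSpace G]

theorem exists_boundedIndexCore_subset {U : Set G} (hU : IsOpen U)
    (h1 : (1 : G) ∈ U) : ∃ n, (boundedIndexCore G n : Set G) ⊆ U := by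
  obtain ⟨H, hH⟩ := ProfiniteGrp.exist_openNormalSubgroup_sub_open_nhds_of_one hU h1
  exact ⟨_, fun x hx => hH (boundedIndexCore_index_le H.isNormal' H.isOpen' hx)⟩

theorem iInf_boundedIndexCore : ⨅ n, boundedIndexCore G n = ⊥ := by
  refine eq_bot_iff.2 fun x hx => by_contra fun hx1 => ?_
  obtain ⟨n, hn⟩ := exists_boundedIndexCore_subset isClosed_singleton.isOpen_compl
    (Set.mem_compl_singleton_iff.2 (Ne.symm hx1 : (1 : G) ≠ x))
  exact hn (mem_iInf.1 hx n) rfl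

theorem eq_top_of_forall_sup_boundedIndexCore_eq_top {H : Subgroup G}
    (hH : IsClosed (H : Set G)) (h : ∀ n, H ⊔ boundedIndexCore G n = ⊤) : H = ⊤ := by
  refine eq_top_iff.2 fun a _ => by_contra fun ha => ?_
  obtain ⟨n, hn⟩ := exists_boundedIndexCore_subset
    (hH.isOpen_compl.preimage (continuous_const_mul a)) (by simpa using ha)
  obtain ⟨y, hy, z, hz, rfl⟩ := mem_sup_of_normal_right.1 (h n ▸ mem_top a)
  exact hn (inv_mem hz) (by simpa using hy)

end BoundedIndexCore

theorem exists_continuous_mulEquiv_of_bijective {G H : Type*} [Group G] [Group H]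
    [TopologicalSpace G] [TopologicalSpace H] [CompactSpace G] [T2Space H] {f : G →* H}
    (hf : Function.Bijective f) (hc : Continuous f) :
    ∃ e : G ≃* H, ⇑e = ⇑f ∧ Continuous e ∧ Continuous e.symm :=
  ⟨MulEquiv.ofBijective f hf, rfl, hc,
    (hc.homeoOfEquivCompactToT2 (f := (MulEquiv.ofBijective f hf).toEquiv)).symm.continuous⟩

section DirectDecomposition

variable {G : Type*} [Group G] [TopologicalSpace G] [ContinuousMul G] [CompactSpace G]
  [T2Space G]

theorem codisjoint_iInf_of_antitone {A B : ℕ → Subgroup G} (hA : Antitone A) (hB : Antitone B)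
    [∀ n, (B n).Normal] (hAc : ∀ n, IsClosed (A n : Set G)) (hBc : ∀ n, IsClosed (B n : Set G))
    (hsup : ∀ n, A n ⊔ B n = ⊤) : Codisjoint (⨅ n, A n) (⨅ n, B n) := by
  refine codisjoint_iff.2 (eq_top_iff.2 fun a _ => ?_)
  let E : ℕ → Set (G × G) := fun n => (A n : Set G) ×ˢ (B n : Set G) ∩ {p | p.1 * p.2 = a}
  have hEc : ∀ n, IsClosed (E n) := fun n =>
    ((hAc n).prod (hBc n)).inter (isClosed_eq continuous_mul continuous_const)
  have hEne : ∀ n, (E n).Nonempty := fun n => by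
    obtain ⟨x, hx, y, hy, hxy⟩ := mem_sup_of_normal_right.1 (hsup n ▸ mem_top a)
    exact ⟨(x, y), ⟨hx, hy⟩, hxy⟩
  obtain ⟨p, hp⟩ := IsCompact.nonempty_iInter_of_sequence_nonempty_isCompact_isClosed E
    (fun n => Set.inter_subset_inter_left _ (Set.prod_mono (hA n.le_succ) (hB n.le_succ)))
    hEne (hEc 0).isCompact hEc
  rw [Set.mem_iInter] at hp
  exact (hp 0).2 ▸ mul_mem_sup (mem_iInf.2 fun n => (hp n).1.1) (mem_iInf.2 fun n => (hp n).1.2)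

theorem isTopIso_prod_of_isCompl {A B : Subgroup G} [A.Normal] [B.Normal]
    (hAc : IsClosed (A : Set G)) (hBc : IsClosed (B : Set G)) (h : IsCompl A B) :
    IsTopIso G (A × B) := by
  have : CompactSpace A := isCompact_iff_compactSpace.1 hAc.isCompact
  have : CompactSpace B := isCompact_iff_compactSpace.1 hBc.isCompact
  let ι : A × B →* G := A.subtype.noncommCoprod B.subtype fun a b =>
    commute_of_normal_of_disjoint A B ‹_› ‹_› h.disjoint a b a.2 b.2
  have hinj : Function.Injective ι := by
    refine (injective_iff_map_eq_one ι).2 fun ⟨a, b⟩ hab => ?_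
    have hab : (a : G) * b = 1 := hab
    have ha : (a : G) ∈ A ⊓ B := by
      refine ⟨a.2, ?_⟩
      rw [eq_inv_of_mul_eq_one_left hab]
      exact B.inv_mem b.2
    rw [h.inf_eq_bot, mem_bot] at ha
    rw [ha, one_mul] at hab
    exact Prod.ext (Subtype.ext ha) (Subtype.ext hab)
  have hsurj : Function.Surjective ι := fun g => by
    obtain ⟨x, hx, y, hy, rfl⟩ := mem_sup_of_normal_right.1 (h.sup_eq_top ▸ mem_top g)
    exact ⟨(⟨x, hx⟩, ⟨y, hy⟩), rfl⟩
  let e := MulEquiv.ofBijective ι ⟨hinj, hsurj⟩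
  have hc : Continuous e :=
    (continuous_subtype_val.comp continuous_fst).mul (continuous_subtype_val.comp continuous_snd)
  exact ⟨e.symm, (hc.homeoOfEquivCompactToT2 (f := e.toEquiv)).symm.continuous, hc⟩

end DirectDecomposition

section Indecomposable

variable {G : Type} [Group G] [TopologicalSpace G] [IsTopologicalGroup G] [CompactSpace G]
  [T2Space G] [TotallyDisconnectedSpace G]

theorem Indecomposable.eq_bot_or_eq_bot_of_isCompl (hind : Indecomposable G)
    {A B : Subgroup G} [A.Normal] [B.Normal] (hAc : IsClosed (A : Set G))
    (hBc : IsClosed (B : Set G)) (h : IsCompl A B) : A = ⊥ ∨ B = ⊥ := by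
  have : CompactSpace A := isCompact_iff_compactSpace.1 hAc.isCompact
  have : CompactSpace B := isCompact_iff_compactSpace.1 hBc.isCompact
  refine (hind A B (isTopIso_prod_of_isCompl hAc hBc h)).imp (fun hA => ?_) (fun hB => ?_)
  · exact eq_bot_iff.2 fun x hx => congrArg Subtype.val (hA ⟨x, hx⟩)
  · exact eq_bot_iff.2 fun x hx => congrArg Subtype.val (hB ⟨x, hx⟩)

theorem Indecomposable.forall_eq_top_or_forall_eq_top (hind : Indecomposable G)
    {A B : ℕ → Subgroup G} (hA : Antitone A) (hB : Antitone B) [hAn : ∀ n, (A n).Normal]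
    [hBn : ∀ n, (B n).Normal] (hAc : ∀ n, IsClosed (A n : Set G))
    (hBc : ∀ n, IsClosed (B n : Set G)) (hinf : ⨅ n, (A n ⊓ B n) = ⊥)
    (hsup : ∀ n, A n ⊔ B n = ⊤) : (∀ n, A n = ⊤) ∨ ∀ n, B n = ⊤ := by
  have : (⨅ n, A n).Normal := normal_iInf_normal hAn
  have : (⨅ n, B n).Normal := normal_iInf_normal hBn
  have hcompl : IsCompl (⨅ n, A n) (⨅ n, B n) :=
    ⟨disjoint_iff.2 (iInf_inf_eq.symm.trans hinf),
      codisjoint_iInf_of_antitone hA hB hAc hBc hsup⟩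
  rcases hind.eq_bot_or_eq_bot_of_isCompl (by rw [coe_iInf]; exact isClosed_iInter hAc)
    (by rw [coe_iInf]; exact isClosed_iInter hBc) hcompl with h | h
  · exact .inr (iInf_eq_top.1 (eq_top_of_bot_isCompl (h ▸ hcompl)))
  · exact .inl (iInf_eq_top.1 (eq_top_of_isCompl_bot (h ▸ hcompl)))

end Indecomposable

section Fitting

variable {G : Type} [Group G] [TopologicalSpace G] [IsTopologicalGroup G] [CompactSpace G]
  [T2Space G] [TotallyDisconnectedSpace G]

theorem SmallGroup.bijective_of_comap_boundedIndexCore_le (hG : SmallGroup G) {f : G →* G}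
    (hf : Continuous f) (h : ∀ n, (boundedIndexCore G n).comap f ≤ boundedIndexCore G n) :
    Function.Bijective f := by
  refine ⟨(injective_iff_map_eq_one f).2 fun x hx => ?_, MonoidHom.range_eq_top.1 ?_⟩
  · have hx : x ∈ ⨅ n, boundedIndexCore G n :=
      mem_iInf.2 fun n => h n (by rw [mem_comap, hx]; exact one_mem _)
    rwa [iInf_boundedIndexCore, mem_bot] at hx
  · refine eq_top_of_forall_sup_boundedIndexCore_eq_top
      (by rw [MonoidHom.coe_range]; exact (isCompact_range hf).isClosed) fun n => ?_
    have : Finite (G ⧸ boundedIndexCore G n) :=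
      quotient_finite_of_isOpen _ (hG.isOpen_boundedIndexCore n)
    have : (boundedIndexCore G n).FiniteIndex := finiteIndex_of_finite_quotient
    exact f.range_sup_eq_top_of_comap_eq (le_antisymm (h n) (boundedIndexCore_le_comap hf n))

theorem Indecomposable.range_iterate_le_or_comap_le (hind : Indecomposable G)
    (hG : SmallGroup G) {f : G →* G} (hfc : Continuous f)
    (hfn : ∀ a b, f (a * b * a⁻¹) = a * f b * a⁻¹) :
    (∀ n, ∃ K, (f.iterate K).range ≤ boundedIndexCore G n) ∨
      ∀ n, (boundedIndexCore G n).comap f ≤ boundedIndexCore G n := by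
  have hfM := boundedIndexCore_le_comap hfc
  choose K hK using fun n => exists_forall_ge_range_iterate_sup_eq_and_comap_iterate_eq f
    (hG.finite_Ici_boundedIndexCore n) (hfM n)
  let A := fun n => (f.iterate (K n)).range ⊔ boundedIndexCore G n
  let B := fun n => (boundedIndexCore G n).comap (f.iterate (K n))
  have hinf : ∀ n, A n ⊓ B n = boundedIndexCore G n := fun n =>
    range_iterate_sup_inf_comap_iterate f (hfM n) (hK n _ (Nat.le_add_right _ _)).2
  have hsup : ∀ n, A n ⊔ B n = ⊤ := fun n =>
    range_iterate_sup_sup_comap_iterate f (hK n _ (Nat.le_add_right _ _)).1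
  have hA : Antitone A := Antitone.diag_of_forall_ge_eq
    (S := fun n L => (f.iterate L).range ⊔ boundedIndexCore G n)
    (fun _ _ _ hmn => sup_le_sup_left (boundedIndexCore_antitone hmn) _) fun n L hL => (hK n L hL).1
  have hB : Antitone B := Antitone.diag_of_forall_ge_eq
    (S := fun n L => (boundedIndexCore G n).comap (f.iterate L))
    (fun _ _ _ hmn => comap_mono (boundedIndexCore_antitone hmn)) fun n L hL => (hK n L hL).2
  have : ∀ n, (A n).Normal := fun n =>
    have := f.normal_range_iterate hfn (K n); sup_normal _ _
  have hclosed : ∀ {H : Subgroup G} n, boundedIndexCore G n ≤ H → IsClosed (H : Set G) :=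
    fun n hH => Subgroup.isClosed_of_isOpen _ (isOpen_mono hH (hG.isOpen_boundedIndexCore n))
  rcases hind.forall_eq_top_or_forall_eq_top hA hB (fun n => hclosed n le_sup_right)
    (fun n => hclosed n (le_comap_iterate f (hfM n) _))
    (by simp only [hinf]; exact iInf_boundedIndexCore) hsup with hAtop | hBtop
  · refine .inr fun n => ?_
    calc (boundedIndexCore G n).comap f ≤ B n := fun x hx => by
          change x ∈ (boundedIndexCore G n).comap (f.iterate (K n))
          rw [← (hK n _ (Nat.le_succ _)).2, mem_comap, MonoidHom.coe_iterate,
            Function.iterate_succ_apply, ← MonoidHom.coe_iterate]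
          exact le_comap_iterate f (hfM n) _ hx
      _ = boundedIndexCore G n := by rw [← hinf n, hAtop n, top_inf_eq]
  · have hAM : ∀ n, A n = boundedIndexCore G n := fun n => by rw [← hinf n, hBtop n, inf_top_eq]
    exact .inl fun n => ⟨K n, hAM n ▸ le_sup_left⟩

end Fitting

theorem sum_automorphism_implies_automorphism_general (G : Type) [Group G] [TopologicalSpace G]
    [IsTopologicalGroup G] [CompactSpace G] [T2Space G] [TotallyDisconnectedSpace G]
    (hG : SmallGroup G) (hind : Indecomposable G)
    (φ ψ : G →* G) (hφc : Continuous φ) (hψc : Continuous ψ)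
    (hφn : ∀ a b : G, φ (a * b * a⁻¹) = a * φ b * a⁻¹)
    (hψn : ∀ a b : G, ψ (a * b * a⁻¹) = a * ψ b * a⁻¹)
    (hauto : ∃ e : G ≃* G, (⇑e = fun a => φ a * ψ a) ∧ Continuous e ∧ Continuous e.symm) :
    (∃ e : G ≃* G, ⇑e = ⇑φ ∧ Continuous e ∧ Continuous e.symm) ∨
      (∃ e : G ≃* G, ⇑e = ⇑ψ ∧ Continuous e ∧ Continuous e.symm) := by
  obtain ⟨e, he, -, hesc⟩ := hauto
  let f : G →* G := φ.comp e.symm.toMonoidHom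
  let g : G →* G := ψ.comp e.symm.toMonoidHom
  have hfg (x : G) : f x * g x = x := (congrFun he (e.symm x)).symm.trans (e.apply_symm_apply x)
  have he_conj (a b : G) : e.symm (a * b * a⁻¹) = a * e.symm b * a⁻¹ := e.injective <| by
    calc e (e.symm (a * b * a⁻¹)) = a * (f b * g b) * a⁻¹ := by rw [e.apply_symm_apply, hfg]
      _ = e (a * e.symm b * a⁻¹) := by
        simp only [he, hφn, hψn, f, g, MonoidHom.comp_apply, MulEquiv.coe_toMonoidHom]
        group
  have hfc : Continuous f := hφc.comp hesc
  rcases hind.range_iterate_le_or_comap_le hG hfc (fun a b => by simp [f, he_conj, hφn])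
    with hnil | hf
  · have hg := hG.bijective_of_comap_boundedIndexCore_le (f := g) (hψc.comp hesc) fun n =>
      (hnil n).elim fun _ hK =>
        f.comap_le_of_range_iterate_le g hfg (boundedIndexCore_le_comap hfc n) hK
    refine .inr (exists_continuous_mulEquiv_of_bijective ?_ hψc)
    convert hg.comp e.bijective
    ext x
    simp [g]
  · refine .inl (exists_continuous_mulEquiv_of_bijective ?_ hφc)
    convert (hG.bijective_of_comap_boundedIndexCore_le hfc hf).comp e.bijective
    ext x
    simp [f]

/-- Let `G` be a small indecomposable profinite group and `φ, ψ` normal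
continuous endomorphisms of `G` whose pointwise product `a ↦ φ a * ψ a` is again an
endomorphism. If the pointwise product is a (topological) automorphism of `G`,
then `φ` or `ψ` is a (topological) automorphism of `G`. -/
theorem sum_automorphism_implies_automorphism (G : Type) [Group G] [TopologicalSpace G]
    [IsTopologicalGroup G] [CompactSpace G] [T2Space G] [TotallyDisconnectedSpace G]
    (hG : SmallGroup G) (hind : Indecomposable G)
    (φ ψ : G →* G) (hφc : Continuous φ) (hψc : Continuous ψ)
    (hφn : ∀ a b : G, φ (a * b * a⁻¹) = a * φ b * a⁻¹)
    (hψn : ∀ a b : G, ψ (a * b * a⁻¹) = a * ψ b * a⁻¹)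
    (hendo : ∀ a b : G, φ (a * b) * ψ (a * b) = (φ a * ψ a) * (φ b * ψ b))
    (hauto : ∃ e : G ≃* G, (⇑e = fun a => φ a * ψ a) ∧ Continuous e ∧ Continuous e.symm) :
    (∃ e : G ≃* G, ⇑e = ⇑φ ∧ Continuous e ∧ Continuous e.symm) ∨
      (∃ e : G ≃* G, ⇑e = ⇑ψ ∧ Continuous e ∧ Continuous e.symm) :=
  sum_automorphism_implies_automorphism_general G hG hind φ ψ hφc hψc hφn hψn hauto
end

section
/- Let p be a prime and let H and K be profinite groups. If ℤ_p × ℤ_p × H is topologically isomorphic to ℤ_p × K, then K is topologically isomorphic to ℤ_p × H. -/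
/-!
Let `f` be the first coordinate of `e : ℤ_p × ℤ_p × H ≅ ℤ_p × K`, so that `K ≅ ker f`. If `f`
restricts to an automorphism of a direct factor `ℤ_p` of the source, projecting `ker f` onto the
complementary factor is an isomorphism, whence `K ≅ ℤ_p × H`.

Continuous endomorphisms of `ℤ_p` are multiplications by scalars, and splitting `e⁻¹ (1, 1)` into
its three components writes `1 ∈ ℤ_p` as a sum of three values of `f`; as `ℤ_p` is local, one of
them is a unit. So `f` is an automorphism of one of the two `ℤ_p` factors, or `f ∘ s` is one for
`s : ℤ_p → H, z ↦ (e⁻¹ (z, 1)).2.2`, whose image is central because `(z, 1)` is. In the last case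
a rescaling of `s` is a central section of `f` on `H`, which splits `H ≅ ℤ_p × ker (f|_H)`, and
exchanging this factor with an outer one produces the required direct factor.
-/

open Multiplicative

namespace ContinuousMulEquiv

noncomputable def ofBijective {G H : Type*} [Group G] [TopologicalSpace G] [CompactSpace G]
    [Group H] [TopologicalSpace H] [T2Space H] (f : G →ₜ* H) (hf : Function.Bijective f) :
    G ≃ₜ* H :=
  mk' (f.continuous.homeoOfEquivCompactToT2 (f := Equiv.ofBijective f hf)) (map_mul f)

variable {A B C D : Type*} [Group A] [TopologicalSpace A] [Group B] [TopologicalSpace B]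
  [Group C] [TopologicalSpace C] [Group D] [TopologicalSpace D]

def prodCongr (e₁ : A ≃ₜ* B) (e₂ : C ≃ₜ* D) : A × C ≃ₜ* B × D where
  toMulEquiv := e₁.toMulEquiv.prodCongr e₂.toMulEquiv
  continuous_toFun := (map_continuous e₁).prodMap (map_continuous e₂)
  continuous_invFun := (map_continuous e₁.symm).prodMap (map_continuous e₂.symm)

def prodLeftComm : A × B × C ≃ₜ* B × A × C where
  toFun x := (x.2.1, x.1, x.2.2)
  invFun x := (x.2.1, x.1, x.2.2)
  left_inv _ := rfl
  right_inv _ := rfl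
  map_mul' _ _ := rfl
  continuous_toFun := by fun_prop
  continuous_invFun := by fun_prop

end ContinuousMulEquiv

theorem isTopIso_iff_nonempty {G H : Type*} [Group G] [TopologicalSpace G] [Group H]
    [TopologicalSpace H] : IsTopIso G H ↔ Nonempty (G ≃ₜ* H) :=
  ⟨fun ⟨e, he, he'⟩ => ⟨⟨e, he, he'⟩⟩, fun ⟨e⟩ => ⟨e, map_continuous e, map_continuous e.symm⟩⟩

namespace PadicInt

variable {p : ℕ} [Fact p.Prime]

theorem addMonoidHom_apply_eq_mul (f : ℤ_[p] →+ ℤ_[p]) (hf : Continuous f) (x : ℤ_[p]) :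
    f x = f 1 * x :=
  congrFun (denseRange_intCast.equalizer hf (by fun_prop)
    (funext fun n => by simpa [mul_comm] using map_zsmul f n 1)) x

theorem bijective_of_isUnit_toAdd (f : Multiplicative ℤ_[p] →ₜ* Multiplicative ℤ_[p])
    {a : Multiplicative ℤ_[p]} (ha : IsUnit (f a).toAdd) : Function.Bijective f := by
  have hlin (x : Multiplicative ℤ_[p]) : (f x).toAdd = (f (ofAdd 1)).toAdd * x.toAdd :=
    addMonoidHom_apply_eq_mul (AddMonoidHom.toMultiplicative.symm f.toMonoidHom)
      (continuous_toAdd.comp (f.continuous.comp continuous_ofAdd)) x.toAdd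
  have hu : IsUnit (f (ofAdd 1)).toAdd := isUnit_of_mul_isUnit_left (hlin a ▸ ha)
  have hf : ⇑f = ofAdd ∘ ((f (ofAdd 1)).toAdd * ·) ∘ toAdd := funext fun x => by
    simp [← hlin]
  rw [hf]
  exact ofAdd.bijective.comp ((IsUnit.isUnit_iff_mulLeft_bijective.1 hu).comp toAdd.bijective)

end PadicInt

section SectionSwap

variable {A H : Type*} [Group A] [Group H]

/-- For a central section `s` of `g`, so that `H = s(A) × ker g`, this map exchanges the factor
`A` with the factor `s(A)` of `H`. -/
def MonoidHom.sectionSwap (g : H →* A) (s : A →* H) (y : A × H) : A × H :=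
  (g y.2, s y.1 * y.2 * (s (g y.2))⁻¹)

variable {g : H →* A} {s : A →* H}

theorem MonoidHom.sectionSwap_involutive (hgs : ∀ a, g (s a) = a)
    (hs : ∀ a x, Commute (s a) x) : Function.Involutive (g.sectionSwap s) := by
  rintro ⟨c, x⟩
  have hc : g (s c * x * (s (g x))⁻¹) = c := by simp [hgs]
  simp only [sectionSwap, hc, Prod.mk.injEq, true_and]
  calc _ = s (g x) * (s c * x) * (s (g x))⁻¹ * (s c)⁻¹ := by group
    _ = x := by rw [(hs _ _).mul_inv_cancel, (hs _ _).mul_inv_cancel]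

theorem MonoidHom.sectionSwap_mul (hs : ∀ a x, Commute (s a) x) (y z : A × H) :
    g.sectionSwap s (y * z) = g.sectionSwap s y * g.sectionSwap s z := by
  rcases y with ⟨c, x⟩
  rcases z with ⟨c', x'⟩
  refine Prod.ext (map_mul g x x') ?_
  calc s (c * c') * (x * x') * (s (g (x * x')))⁻¹
      = s c * (s c' * x) * x' * ((s (g x'))⁻¹ * (s (g x))⁻¹) := by
        simp only [map_mul]; group
    _ = s c * (x * s c') * (x' * (s (g x'))⁻¹ * (s (g x))⁻¹) := by rw [(hs c' x).eq]; group
    _ = s c * x * ((s (g x))⁻¹ * (s c' * x' * (s (g x'))⁻¹)) := by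
      rw [(hs (g x) _).inv_left.eq]; group
    _ = s c * x * (s (g x))⁻¹ * (s c' * x' * (s (g x'))⁻¹) := by group

end SectionSwap

def ContinuousMulEquiv.sectionSwap {A H : Type*} [Group A] [TopologicalSpace A] [Group H]
    [TopologicalSpace H] [IsTopologicalGroup H] (g : H →ₜ* A) (s : A →ₜ* H)
    (hgs : ∀ a, g (s a) = a) (hs : ∀ a x, Commute (s a) x) : A × H ≃ₜ* A × H :=
  have hcont : Continuous ((g : H →* A).sectionSwap s) := by
    change Continuous fun y : A × H => (g y.2, s y.1 * y.2 * (s (g y.2))⁻¹)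
    fun_prop
  { toFun := (g : H →* A).sectionSwap s
    invFun := (g : H →* A).sectionSwap s
    left_inv := MonoidHom.sectionSwap_involutive hgs hs
    right_inv := MonoidHom.sectionSwap_involutive hgs hs
    map_mul' := MonoidHom.sectionSwap_mul hs
    continuous_toFun := hcont
    continuous_invFun := hcont }

section Cancel

variable {A W K : Type*} [Group A] [Group W] [Group K]

theorem MulEquiv.bijective_snd_symm_inr (e : A × W ≃* A × K)
    (he : Function.Bijective fun a => (e (a, 1)).1) :
    Function.Bijective fun k => (e.symm (1, k)).2 := by
  have hfst (a : A) (w : W) : (e (a, w)).1 = (e (a, 1)).1 * (e (1, w)).1 := by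
    rw [← Prod.fst_mul, ← map_mul, Prod.mk_mul_mk, mul_one, one_mul]
  constructor
  · intro k k' (hkk' : (e.symm (1, k)).2 = (e.symm (1, k')).2)
    set x := e.symm (1, k)
    set x' := e.symm (1, k')
    have hx : e x = (1, k) := e.apply_symm_apply _
    have hx' : e x' = (1, k') := e.apply_symm_apply _
    have hfst_eq :
        (e (x.1, 1)).1 * (e (1, x.2)).1 = (e (x'.1, 1)).1 * (e (1, x'.2)).1 := by
      rw [← hfst, ← hfst, Prod.mk.eta, Prod.mk.eta, hx, hx']
    rw [hkk'] at hfst_eq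
    have hxx' : x = x' := Prod.ext (he.1 (mul_right_cancel hfst_eq)) hkk'
    calc k = (e x).2 := by rw [hx]
      _ = (e x').2 := by rw [hxx']
      _ = k' := by rw [hx']
  · intro w
    obtain ⟨a, ha : (e (a, 1)).1 = ((e (1, w)).1)⁻¹⟩ := he.2 ((e (1, w)).1)⁻¹
    have hx : e (a, w) = (1, (e (a, w)).2) :=
      Prod.ext (by rw [hfst, ha, inv_mul_cancel]) rfl
    exact ⟨(e (a, w)).2, show (e.symm _).2 = w by rw [← hx, e.symm_apply_apply]⟩

variable [TopologicalSpace A] [TopologicalSpace W] [T2Space W] [TopologicalSpace K]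
  [CompactSpace K]

noncomputable def ContinuousMulEquiv.prodCancelLeft (e : A × W ≃ₜ* A × K)
    (he : Function.Bijective fun a => (e (a, 1)).1) : K ≃ₜ* W :=
  ofBijective ((ContinuousMonoidHom.snd A W).comp
      ((e.symm : A × K →ₜ* A × W).comp (ContinuousMonoidHom.inr A K)))
    (MulEquiv.bijective_snd_symm_inr e.toMulEquiv he)

end Cancel

theorem MulEquiv.isUnit_toAdd_fst_apply_factor {R H K : Type*} [CommRing R] [IsLocalRing R]
    [Group H] [Group K] (e : Multiplicative R × Multiplicative R × H ≃* Multiplicative R × K)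
    (y : Multiplicative R × Multiplicative R × H) (hy : IsUnit (e y).1.toAdd) :
    IsUnit (e (y.1, 1, 1)).1.toAdd ∨ IsUnit (e (1, y.2.1, 1)).1.toAdd ∨
      IsUnit (e (1, 1, y.2.2)).1.toAdd := by
  have hy_eq : y = (y.1, 1, 1) * (1, y.2.1, 1) * (1, 1, y.2.2) := by simp
  rw [hy_eq, map_mul, map_mul, Prod.fst_mul, Prod.fst_mul, toAdd_mul, toAdd_mul] at hy
  rcases IsLocalRing.isUnit_or_isUnit_of_isUnit_add hy with h | h
  · exact (IsLocalRing.isUnit_or_isUnit_of_isUnit_add h).elim Or.inl (Or.inr ∘ Or.inl)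
  · exact Or.inr (Or.inr h)

theorem MulEquiv.commute_symm_mk_one {A G K : Type*} [CommGroup A] [Group G] [Group K]
    (e : G ≃* A × K) (z : A) (y : G) : Commute (e.symm (z, 1)) y := by
  have h : Commute ((z, 1) : A × K) (e y) := Prod.ext (mul_comm _ _) (Commute.one_left _).eq
  simpa using h.map e.symm

namespace PadicInt

variable {p : ℕ} [Fact p.Prime] {H K : Type*} [Group H] [TopologicalSpace H] [Group K]
  [TopologicalSpace K]

theorem exists_central_section_of_isUnit (g : H →ₜ* Multiplicative ℤ_[p])
    (s₀ : Multiplicative ℤ_[p] →ₜ* H) (hs₀ : ∀ a x, Commute (s₀ a) x)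
    {a : Multiplicative ℤ_[p]} (ha : IsUnit (g (s₀ a)).toAdd) :
    ∃ s : Multiplicative ℤ_[p] →ₜ* H, (∀ a, g (s a) = a) ∧ ∀ a x, Commute (s a) x := by
  let θ := ContinuousMulEquiv.ofBijective (g.comp s₀) (bijective_of_isUnit_toAdd (g.comp s₀) ha)
  exact ⟨s₀.comp (ContinuousMonoidHom.toContinuousMonoidHom θ.symm),
    fun a => θ.apply_symm_apply a, fun a => hs₀ _⟩

theorem exists_isUnit_toAdd_fst_trans [IsTopologicalGroup H]
    (e : Multiplicative ℤ_[p] × Multiplicative ℤ_[p] × H ≃ₜ* Multiplicative ℤ_[p] × K) :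
    ∃ (d : Multiplicative ℤ_[p] × Multiplicative ℤ_[p] × H ≃ₜ*
        Multiplicative ℤ_[p] × Multiplicative ℤ_[p] × H) (a : Multiplicative ℤ_[p]),
      IsUnit ((d.trans e) (a, 1)).1.toAdd := by
  set y := e.symm (ofAdd 1, 1)
  have hy : IsUnit (e y).1.toAdd := by simp [y]
  rcases e.toMulEquiv.isUnit_toAdd_fst_apply_factor y hy with h | h | h
  · exact ⟨.refl _, y.1, h⟩
  · exact ⟨.prodLeftComm, y.2.1, h⟩
  · let g : H →ₜ* Multiplicative ℤ_[p] := (ContinuousMonoidHom.fst _ K).comp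
      ((ContinuousMonoidHom.toContinuousMonoidHom e).comp
        ((ContinuousMonoidHom.inr _ _).comp (ContinuousMonoidHom.inr _ _)))
    let s₀ : Multiplicative ℤ_[p] →ₜ* H := (ContinuousMonoidHom.snd _ _).comp
      ((ContinuousMonoidHom.snd _ _).comp
        ((ContinuousMonoidHom.toContinuousMonoidHom e.symm).comp (ContinuousMonoidHom.inl _ K)))
    have hs₀ (z : Multiplicative ℤ_[p]) (x : H) : Commute (s₀ z) x :=
      (e.toMulEquiv.commute_symm_mk_one z (1, 1, x)).map
        ((MonoidHom.snd _ H).comp (MonoidHom.snd _ _))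
    obtain ⟨s, hgs, hs⟩ := exists_central_section_of_isUnit g s₀ hs₀ (a := ofAdd 1) h
    refine ⟨ContinuousMulEquiv.prodLeftComm.trans
      (ContinuousMulEquiv.prodCongr (.refl _) (ContinuousMulEquiv.sectionSwap g s hgs hs)),
      ofAdd 1, ?_⟩
    have hd : (e (1, g 1, s (ofAdd 1) * 1 * (s (g 1))⁻¹)).1 = ofAdd 1 := by
      simp only [map_one, mul_one, inv_one]
      exact hgs (ofAdd 1)
    show IsUnit (e (1, g 1, s (ofAdd 1) * 1 * (s (g 1))⁻¹)).1.toAdd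
    rw [hd, toAdd_ofAdd]
    exact isUnit_one

end PadicInt

theorem padic_cancellation_double_general (p : ℕ) [Fact p.Prime] (H K : Type)
    [Group H] [TopologicalSpace H] [IsTopologicalGroup H] [T2Space H]
    [Group K] [TopologicalSpace K] [CompactSpace K]
    (h : IsTopIso (Multiplicative (PadicInt p) × Multiplicative (PadicInt p) × H)
      (Multiplicative (PadicInt p) × K)) :
    IsTopIso K (Multiplicative (PadicInt p) × H) := by
  obtain ⟨e⟩ := isTopIso_iff_nonempty.1 h
  obtain ⟨d, a, ha⟩ := PadicInt.exists_isUnit_toAdd_fst_trans e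
  have hbij := PadicInt.bijective_of_isUnit_toAdd ((ContinuousMonoidHom.fst _ K).comp
    ((ContinuousMonoidHom.toContinuousMonoidHom (d.trans e)).comp
      (ContinuousMonoidHom.inl _ _))) ha
  exact isTopIso_iff_nonempty.2 ⟨(d.trans e).prodCancelLeft hbij⟩

/-- If `ℤ_p × ℤ_p × H ≅ ℤ_p × K` (topological isomorphism of profinite
groups, `ℤ_p` written multiplicatively), then `K ≅ ℤ_p × H`. -/
theorem padic_cancellation_double (p : ℕ) [Fact p.Prime] (H K : Type)
    [Group H] [TopologicalSpace H] [IsTopologicalGroup H] [CompactSpace H] [T2Space H]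
    [TotallyDisconnectedSpace H]
    [Group K] [TopologicalSpace K] [IsTopologicalGroup K] [CompactSpace K] [T2Space K]
    [TotallyDisconnectedSpace K]
    (h : IsTopIso (Multiplicative (PadicInt p) × Multiplicative (PadicInt p) × H)
      (Multiplicative (PadicInt p) × K)) :
    IsTopIso K (Multiplicative (PadicInt p) × H) :=
  padic_cancellation_double_general p H K h
end

section
/- Let p be a prime and let G_1, G_2 be abelian profinite groups. If ℤ_p × G_1 is topologically isomorphic to ℤ_p × G_2, then G_1 is topologically isomorphic to G_2. -/
/-!
Write an isomorphism `e : ℤ_p × G₁ ≅ ℤ_p × G₂` as a matrix `[[α, β], [γ, δ]]` of continuous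
homomorphisms, and `e⁻¹` likewise with primes. Continuous endomorphisms of `ℤ_p` are
multiplications by scalars, so the `ℤ_p`-entry of `e ∘ e⁻¹ = 1` reads `c c' + d = 1` in the
local ring `ℤ_p`, where `c`, `c'`, `d` are the scalars of `α`, `α'`, `β ∘ γ'`. Writing
`1 = c (c' - 1) + (c + d)`, either `c` or `c + d` is a unit; in the second case precomposing `e`
with the shear `(a, g) ↦ (a, γ' a * g)` turns the corner into `c + d`. Once the corner `α` is
invertible, `g ↦ δ g * γ (α⁻¹ (β g))⁻¹` is an isomorphism `G₁ ≅ G₂` (a Schur complement) whose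
inverse is the `G₂ → G₁` entry of `e⁻¹`.
-/

open Multiplicative

section Corner

variable {A B G₁ G₂ : Type*} [CommGroup A] [CommGroup B] [Group G₁] [Group G₂]

variable {F : Type*} [FunLike F (A × G₁) (B × G₂)] [MonoidHomClass F (A × G₁) (B × G₂)]

def corner (e : F) : A →* B :=
  (MonoidHom.fst B G₂).comp ((e : A × G₁ →* B × G₂).comp (MonoidHom.inl A G₁))

theorem corner_apply (e : F) (a : A) : corner e a = (e (a, 1)).1 := rfl

theorem corner_mul_fst (e : F) (a : A) (g : G₁) :
    corner e a * (e (1, g)).1 = (e (a, g)).1 := by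
  rw [corner_apply, ← Prod.fst_mul, ← map_mul, Prod.mk_mul_mk, mul_one, one_mul]

variable [TopologicalSpace A] [TopologicalSpace B] [TopologicalSpace G₁] [TopologicalSpace G₂]

theorem continuous_corner {e : F} (he : Continuous e) : Continuous (corner e) :=
  continuous_fst.comp (he.comp (continuous_id.prodMk continuous_const))

theorem isTopIso_of_bijective_corner [CompactSpace A] [T2Space B] [ContinuousInv A]
    (e : A × G₁ ≃* B × G₂) (he : Continuous e) (he' : Continuous e.symm)
    (hα : Function.Bijective (corner e)) : IsTopIso G₁ G₂ := by
  let u := MulEquiv.ofBijective _ hα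
  have hu : Continuous u.symm :=
    (continuous_corner he).continuous_symm_of_equiv_compact_to_t2 (f := u.toEquiv)
  let β : G₁ →* B := (MonoidHom.fst B G₂).comp (e.toMonoidHom.comp (MonoidHom.inr A G₁))
  let σ : G₁ →* A := (u.symm.toMonoidHom.comp β)⁻¹
  have hσ (g : G₁) : (e (σ g, g)).1 = 1 := by
    rw [← corner_mul_fst e]
    simp [σ, u, β]
  let θ : G₁ →* G₂ := (MonoidHom.snd B G₂).comp (e.toMonoidHom.comp (σ.prod (MonoidHom.id G₁)))
  let θ' : G₂ →* G₁ := (MonoidHom.snd A G₁).comp (e.symm.toMonoidHom.comp (MonoidHom.inr B G₂))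
  have hθ'θ (g : G₁) : θ' (θ g) = g := by
    have : e (σ g, g) = (1, θ g) := Prod.ext (hσ g) rfl
    simp [θ', ← this]
  have hθθ' (h : G₂) : θ (θ' h) = h := by
    set x := e.symm (1, h)
    have hex : e x = (1, h) := e.apply_symm_apply _
    have hσx : σ x.2 = x.1 := hα.1 <| mul_right_cancel (b := (e (1, x.2)).1) <| by
      rw [corner_mul_fst, corner_mul_fst, hσ, Prod.mk.eta, hex]
    show (e (σ x.2, x.2)).2 = h
    rw [hσx, hex]
  have hβ : Continuous β := continuous_fst.comp (he.comp (continuous_const.prodMk continuous_id))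
  refine ⟨{ θ with invFun := θ', left_inv := hθ'θ, right_inv := hθθ' }, ?_, ?_⟩
  · exact continuous_snd.comp (he.comp ((hu.comp hβ).inv.prodMk continuous_id))
  · exact continuous_snd.comp (he'.comp (continuous_const.prodMk continuous_id))

end Corner

section Shear

variable {A G : Type*} [Group A] [CommGroup G]

def shear (φ : A →* G) : A × G ≃* A × G where
  toFun x := (x.1, φ x.1 * x.2)
  invFun x := (x.1, (φ x.1)⁻¹ * x.2)
  left_inv x := by simp
  right_inv x := by simp
  map_mul' x y := by
    simp only [Prod.fst_mul, Prod.snd_mul, map_mul, Prod.mk_mul_mk]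
    rw [mul_mul_mul_comm]

@[simp]
theorem shear_apply (φ : A →* G) (x : A × G) : shear φ x = (x.1, φ x.1 * x.2) := rfl

variable [TopologicalSpace A] [TopologicalSpace G] [IsTopologicalGroup G]

theorem continuous_shear {φ : A →* G} (hφ : Continuous φ) : Continuous (shear φ) :=
  continuous_fst.prodMk ((hφ.comp continuous_fst).mul continuous_snd)

theorem continuous_shear_symm {φ : A →* G} (hφ : Continuous φ) : Continuous (shear φ).symm :=
  continuous_fst.prodMk ((hφ.comp continuous_fst).inv.mul continuous_snd)

end Shear

theorem corner_shear_trans {A B G₁ G₂ : Type*} [CommGroup A] [CommGroup B] [CommGroup G₁]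
    [Group G₂] (φ : A →* G₁) (e : A × G₁ ≃* B × G₂) (a : A) :
    corner ((shear φ).trans e) a = corner e a * (e (1, φ a)).1 := by
  rw [corner_mul_fst, corner_apply, MulEquiv.trans_apply, shear_apply, mul_one]

section Padic

variable {p : ℕ} [Fact p.Prime]

theorem PadicInt.toAdd_map_eq_mul
    (f : Multiplicative ℤ_[p] →* Multiplicative ℤ_[p]) (hf : Continuous f)
    (x : Multiplicative ℤ_[p]) : toAdd (f x) = toAdd (f (ofAdd 1)) * toAdd x := by
  refine congrFun (PadicInt.denseRange_natCast.equalizer (g := fun x => toAdd (f (ofAdd x)))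
    (continuous_toAdd.comp (hf.comp continuous_ofAdd)) (continuous_const_mul _) ?_) (toAdd x)
  funext n
  change toAdd (f (ofAdd (n : ℤ_[p]))) = toAdd (f (ofAdd 1)) * n
  rw [← nsmul_one, ofAdd_nsmul, map_pow, toAdd_pow, nsmul_eq_mul, nsmul_eq_mul, mul_one, mul_comm]

theorem PadicInt.bijective_of_isUnit_toAdd_map_one
    (f : Multiplicative ℤ_[p] →* Multiplicative ℤ_[p]) (hf : Continuous f)
    (hu : IsUnit (toAdd (f (ofAdd 1)))) : Function.Bijective f := by
  have hf' := PadicInt.toAdd_map_eq_mul f hf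
  refine ⟨fun x y hxy => ?_, fun y => ⟨ofAdd (↑hu.unit⁻¹ * toAdd y), toAdd.injective ?_⟩⟩
  · have := congrArg toAdd hxy
    rw [hf' x, hf' y] at this
    exact toAdd.injective (hu.mul_left_cancel this)
  · rw [hf', toAdd_ofAdd, ← mul_assoc, hu.mul_val_inv, one_mul]

variable {G₁ G₂ : Type*} [CommGroup G₁] [Group G₂] [TopologicalSpace G₁] [TopologicalSpace G₂]

theorem exists_isUnit_corner_shear_trans
    (e : Multiplicative ℤ_[p] × G₁ ≃* Multiplicative ℤ_[p] × G₂)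
    (he : Continuous e) (he' : Continuous e.symm) :
    ∃ φ : Multiplicative ℤ_[p] →* G₁, Continuous φ ∧
      IsUnit (toAdd (corner ((shear φ).trans e) (ofAdd 1))) := by
  set c := toAdd (corner e (ofAdd 1))
  set c' := toAdd (corner e.symm (ofAdd 1))
  let γ' : Multiplicative ℤ_[p] →* G₁ :=
    (MonoidHom.snd _ G₁).comp (e.symm.toMonoidHom.comp (MonoidHom.inl _ G₂))
  set d := toAdd (e (1, γ' (ofAdd 1))).1
  have hsum : c * c' + d = 1 := by
    have key : corner e (corner e.symm (ofAdd 1)) * (e (1, γ' (ofAdd 1))).1 = ofAdd 1 := by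
      rw [corner_mul_fst]
      exact congrArg Prod.fst (e.apply_symm_apply (ofAdd 1, 1))
    have := congrArg toAdd key
    rwa [toAdd_mul, PadicInt.toAdd_map_eq_mul _ (continuous_corner he), toAdd_ofAdd] at this
  rcases IsLocalRing.isUnit_or_isUnit_of_add_one
    (show c * (c' - 1) + (c + d) = 1 by linear_combination hsum) with hc | hcd
  · refine ⟨1, continuous_const, ?_⟩
    rw [corner_shear_trans, MonoidHom.one_apply, Prod.mk_one_one, map_one e, Prod.fst_one, mul_one]
    exact isUnit_of_mul_isUnit_left hc
  · refine ⟨γ', continuous_snd.comp (he'.comp (continuous_id.prodMk continuous_const)), ?_⟩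
    rwa [corner_shear_trans, toAdd_mul]

end Padic

theorem padic_cancellation_abelian_general (p : ℕ) [Fact p.Prime] (G₁ G₂ : Type)
    [CommGroup G₁] [TopologicalSpace G₁] [IsTopologicalGroup G₁]
    [CommGroup G₂] [TopologicalSpace G₂]
    (h : IsTopIso (Multiplicative (PadicInt p) × G₁) (Multiplicative (PadicInt p) × G₂)) :
    IsTopIso G₁ G₂ := by
  obtain ⟨e, he, he'⟩ := h
  obtain ⟨φ, hφ, hunit⟩ := exists_isUnit_corner_shear_trans e he he'
  have he_shear : Continuous ((shear φ).trans e) := he.comp (continuous_shear hφ)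
  exact isTopIso_of_bijective_corner _ he_shear ((continuous_shear_symm hφ).comp he')
    (PadicInt.bijective_of_isUnit_toAdd_map_one _ (continuous_corner he_shear) hunit)

/-- `ℤ_p` can be cancelled from direct products of abelian profinite
groups: if `ℤ_p × G₁ ≅ ℤ_p × G₂` with `G₁, G₂` abelian profinite, then `G₁ ≅ G₂`. -/
theorem padic_cancellation_abelian (p : ℕ) [Fact p.Prime] (G₁ G₂ : Type)
    [CommGroup G₁] [TopologicalSpace G₁] [IsTopologicalGroup G₁] [CompactSpace G₁] [T2Space G₁]
    [TotallyDisconnectedSpace G₁]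
    [CommGroup G₂] [TopologicalSpace G₂] [IsTopologicalGroup G₂] [CompactSpace G₂] [T2Space G₂]
    [TotallyDisconnectedSpace G₂]
    (h : IsTopIso (Multiplicative (PadicInt p) × G₁) (Multiplicative (PadicInt p) × G₂)) :
    IsTopIso G₁ G₂ :=
  padic_cancellation_abelian_general p G₁ G₂ h
end

section
/- Let G be a small profinite group and suppose G is topologically isomorphic to a direct product ∏_{i∈I} G_i of profinite groups in which every factor G_i is nontrivial. Then the index set I is at most countable. -/
/-! Each nontrivial factor `Gᵢ` has a proper open normal subgroup `Nᵢ`; pulling `Nᵢ` back along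
the `i`-th projection gives open normal subgroups of the product that are pairwise distinct,
since `Pi.mulSingle j g` lies in the pullback of `Nᵢ` for `i ≠ j` but not in that of `Nⱼ`
when `g ∉ Nⱼ`. So `I` injects into the open normal subgroups of `G`, and a small group has
only countably many of those, finitely many for each index. -/

open Function

theorem SmallGroup.countable_setOf_normal_isOpen {G : Type*} [Group G] [TopologicalSpace G]
    (hG : SmallGroup G) :
    {H : Subgroup G | H.Normal ∧ IsOpen (H : Set G)}.Countable := by
  have hcover : {H : Subgroup G | H.Normal ∧ IsOpen (H : Set G)} =
      ⋃ n : ℕ, {H : Subgroup G | H.Normal ∧ IsOpen (H : Set G) ∧ H.index = n} := by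
    ext H
    simp
  rw [hcover]
  exact Set.countable_iUnion fun n => (hG n).countable

theorem ProfiniteGrp.exists_openNormalSubgroup_notMem {G : Type*} [Group G] [TopologicalSpace G]
    [IsTopologicalGroup G] [CompactSpace G] [T2Space G] [TotallyDisconnectedSpace G]
    {g : G} (hg : g ≠ 1) :
    ∃ H : OpenNormalSubgroup G, g ∉ H := by
  obtain ⟨H, hH⟩ := ProfiniteGrp.exist_openNormalSubgroup_sub_open_nhds_of_one
    isOpen_compl_singleton (Set.mem_compl_singleton_iff.mpr hg.symm)
  exact ⟨H, fun hgH => hH hgH rfl⟩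

theorem Subgroup.injective_comap_evalMonoidHom {ι : Type*} {G : ι → Type*}
    [∀ i, Group (G i)] (N : ∀ i, Subgroup (G i)) (g : ∀ i, G i) (hg : ∀ i, g i ∉ N i) :
    Injective fun i => (N i).comap (Pi.evalMonoidHom G i) := by
  classical
  intro i j hij
  by_contra hne
  have hi : Pi.mulSingle j (g j) ∈ (N i).comap (Pi.evalMonoidHom G i) := by
    simp [Pi.mulSingle_eq_of_ne hne, (N i).one_mem]
  rw [show (N i).comap (Pi.evalMonoidHom G i) = (N j).comap (Pi.evalMonoidHom G j) from hij] at hi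
  exact hg j (by simpa using hi)

theorem smallProfinite_product_index_countable_general (G : Type) [Group G] [TopologicalSpace G]
    (hG : SmallGroup G) (I : Type) (F : I → ProfiniteGroup)
    (hnt : ∀ i, Nontrivial (F i).carrier)
    (h : IsTopIso G (∀ i, (F i).carrier)) :
    Countable I := by
  obtain ⟨e, he, -⟩ := h
  choose g hg using fun i => exists_ne (1 : (F i).carrier)
  choose N hN using fun i => ProfiniteGrp.exists_openNormalSubgroup_notMem (hg i)
  let K : I → Subgroup G := fun i =>
    ((N i : Subgroup (F i).carrier).comap (Pi.evalMonoidHom _ i)).comap e.toMonoidHom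
  have hK_mem : ∀ i, K i ∈ {H : Subgroup G | H.Normal ∧ IsOpen (H : Set G)} := fun i =>
    ⟨inferInstanceAs ((Subgroup.comap _ _).comap _).Normal,
      ((N i).isOpen.preimage (continuous_apply i)).preimage he⟩
  have hK_inj : Injective K :=
    (Subgroup.comap_injective e.surjective).comp
      (Subgroup.injective_comap_evalMonoidHom (fun i => (N i : Subgroup _)) g hN)
  have := hG.countable_setOf_normal_isOpen.to_subtype
  exact Injective.countable (f := fun i => (⟨K i, hK_mem i⟩ :
    {H : Subgroup G | H.Normal ∧ IsOpen (H : Set G)}))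
    fun _ _ hij => hK_inj (Subtype.ext_iff.mp hij)

/-- If a small profinite group is topologically isomorphic to a direct
product of nontrivial profinite groups, then the index set is at most countable. -/
theorem smallProfinite_product_index_countable (G : Type) [Group G] [TopologicalSpace G]
    [IsTopologicalGroup G] [CompactSpace G] [T2Space G] [TotallyDisconnectedSpace G]
    (hG : SmallGroup G) (I : Type) (F : I → ProfiniteGroup)
    (hnt : ∀ i, Nontrivial (F i).carrier)
    (h : IsTopIso G (∀ i, (F i).carrier)) :
    Countable I :=
  smallProfinite_product_index_countable_general G hG I F hnt h
end
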